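/- arXiv:math/0609806 — 5 statements merged into one kernel-verified Lean document; each statement's English description precedes it below -/
import Mathlib

section
/- Let N ≥ 1 be an integer, β > 0, 0 < ξ < 1, and let λ be a partition with ℓ(λ) ≤ N. Set x_i = λ_i + N − i for i = 1, …, N. Then M_{N, N+β−1, ξ}(λ) = const_N · ∏_{i=1}^{N} W_{β,ξ}(x_i) · ∏_{1≤i<j≤N}(x_i − x_j)², where const_N = (1−ξ)^{N(N+β−1)} · ξ^{−N(N−1)/2} · ∏_{i=1}^{N} Γ(β)/(Γ(N−i+1)Γ(N−i+β)). In other words, under the correspondence λ ↦ {x_1, …, x_N}, the degenerate-series z-measure with parameters (z = N, z′ = N+β−1, ξ) is the N-point Meixner orthogonal polynomial ensemble with parameters (β, ξ). -/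
/-- A Young diagram / partition: a weakly decreasing function `ℕ → ℕ`
(0-based indexing of the rows) which is eventually zero. -/
structure Yd where
  part : ℕ → ℕ
  anti : Antitone part
  vanish : ∃ N, ∀ i, N ≤ i → part i = 0

/-- The number of boxes `|λ|` of a partition (the number of cells `(i, j)` with `j < λ_i`). -/
noncomputable def Yd.size (μ : Yd) : ℕ := Nat.card {p : ℕ × ℕ // p.2 < μ.part p.1}

/-- The number of nonzero rows `ℓ(λ)` of a partition. -/
noncomputable def Yd.len (μ : Yd) : ℕ := Nat.card {i : ℕ // μ.part i ≠ 0}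

/-- `dim λ`, the number of standard Young tableaux of shape `λ`, given by the explicit
formula `|λ|! · ∏_{i<j≤N} (λ_i - i - λ_j + j) / ∏_{i≤N} (λ_i + N - i)!` with `N = ℓ(λ)`. -/
noncomputable def Yd.dim (μ : Yd) : ℝ :=
  (Nat.factorial μ.size : ℝ) *
    (∏ i ∈ Finset.range μ.len, ∏ j ∈ Finset.range μ.len,
      if i < j then ((μ.part i : ℝ) - i) - ((μ.part j : ℝ) - j) else 1) /
    ∏ i ∈ Finset.range μ.len, (Nat.factorial (μ.part i + (μ.len - 1 - i)) : ℝ)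

/-- The Pochhammer symbol `(w)_n = w (w+1) ⋯ (w+n-1)`. -/
def pochC (w : ℂ) (n : ℕ) : ℂ := ∏ k ∈ Finset.range n, (w + k)

/-- The generalized Pochhammer symbol `(w)_λ = ∏_i (w - i + 1)_{λ_i}`. -/
noncomputable def pochY (w : ℂ) (μ : Yd) : ℂ :=
  ∏ i ∈ Finset.range μ.len, pochC (w - i) (μ.part i)

/-- The weight `M_{z,z',ξ}(λ) = (1-ξ)^{zz'} ξ^{|λ|} (z)_λ (z')_λ (dim λ / |λ|!)²` of the
z-measure; the power `(1-ξ)^{zz'}` is the principal branch (complex `cpow`). -/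
noncomputable def zWt (z z' ξ : ℂ) (μ : Yd) : ℂ :=
  (1 - ξ) ^ (z * z') * ξ ^ μ.size * pochY z μ * pochY z' μ *
    (((μ.dim / (Nat.factorial μ.size : ℝ)) : ℝ) : ℂ) ^ 2

/-- Principal series: `z` is non-real and `z' = conj z`. -/
def PrincipalSeries (z z' : ℂ) : Prop := z.im ≠ 0 ∧ z' = (starRingEnd ℂ) z

/-- Complementary series: `z, z'` are real and lie in the same interval `(m, m+1)`. -/
def ComplementarySeries (z z' : ℂ) : Prop :=
  z.im = 0 ∧ z'.im = 0 ∧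
    ∃ m : ℤ, (m : ℝ) < z.re ∧ z.re < m + 1 ∧ (m : ℝ) < z'.re ∧ z'.re < m + 1

/-- Degenerate series: one of `z, z'` is a nonzero integer `N`, the other one is real,
has the same sign, and has absolute value greater than `|N| - 1`. -/
def DegenerateSeries (z z' : ℂ) : Prop :=
  (∃ N : ℤ, N ≠ 0 ∧ z = (N : ℂ) ∧ z'.im = 0 ∧ 0 < (N : ℝ) * z'.re ∧ |(N : ℝ)| - 1 < |z'.re|)
  ∨ (∃ N : ℤ, N ≠ 0 ∧ z' = (N : ℂ) ∧ z.im = 0 ∧ 0 < (N : ℝ) * z.re ∧ |(N : ℝ)| - 1 < |z.re|)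
/-- The Pochhammer symbol `(w)_n` for a real `w`. -/
def pochR (w : ℝ) (n : ℕ) : ℝ := ∏ k ∈ Finset.range n, (w + k)

/-- The Meixner weight function `W_{β,ξ}(x) = Γ(β+x) ξ^x / (Γ(β) x!)` on `ℤ₊`. -/
noncomputable def meixnerW (β ξ : ℝ) (x : ℕ) : ℝ :=
  Real.Gamma (β + x) * ξ ^ x / (Real.Gamma β * Nat.factorial x)

/-- The Meixner polynomial `𝔐_n(x; β, ξ) = Σ_k (-n)_k (-x)_k ((ξ-1)/ξ)^k / ((β)_k k!)`. -/
noncomputable def meixnerM (β ξ : ℝ) (n x : ℕ) : ℝ :=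
  ∑ k ∈ Finset.range (n + 1),
    pochR (-(n : ℝ)) k * pochR (-(x : ℝ)) k * ((ξ - 1) / ξ) ^ k /
      (pochR β k * Nat.factorial k)

/-- The normalized Meixner function
`𝔐̃_n(x; β, ξ) = (-1)^n (ξ^n (1-ξ)^β Γ(β+n)/(Γ(β) n!))^{1/2} 𝔐_n(x; β, ξ) W_{β,ξ}(x)^{1/2}`. -/
noncomputable def meixnerT (β ξ : ℝ) (n x : ℕ) : ℝ :=
  (-1) ^ n *
    Real.sqrt (ξ ^ n * (1 - ξ) ^ β * Real.Gamma (β + n) / (Real.Gamma β * Nat.factorial n)) *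
    meixnerM β ξ n x * Real.sqrt (meixnerW β ξ x)


namespace ZMeasureAux
open Finset


lemma part_zero_of_len_le (μ : Yd) {i : ℕ} (h : μ.len ≤ i) : μ.part i = 0 := by
  by_contra hne
  obtain ⟨M, hM⟩ := μ.vanish
  have hfin : {j : ℕ | μ.part j ≠ 0}.Finite := by
    apply Set.Finite.subset (Set.finite_Iio M)
    intro j hj
    simp only [Set.mem_setOf_eq, Set.mem_Iio] at *
    by_contra hj'
    exact hj (hM j (by omega))
  have hsub : ↑(Finset.range (i+1)) ⊆ {j : ℕ | μ.part j ≠ 0} := by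
    intro j hj
    simp only [Finset.coe_range, Set.mem_Iio] at hj
    simp only [Set.mem_setOf_eq]
    intro h0
    have : μ.part i ≤ μ.part j := μ.anti (by omega)
    omega
  have hcard := Set.ncard_le_ncard hsub hfin
  rw [Set.ncard_coe_finset, Finset.card_range] at hcard
  have hlen : μ.len = {j : ℕ | μ.part j ≠ 0}.ncard := by
    rw [Yd.len, ← Nat.card_coe_set_eq]
    rfl
  omega

lemma size_eq_sum (μ : Yd) {n : ℕ} (h : μ.len ≤ n) :
    μ.size = ∑ i ∈ Finset.range n, μ.part i := by
  classical
  have hz : ∀ i, n ≤ i → μ.part i = 0 := fun i hi => part_zero_of_len_le μ (le_trans h hi)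
  set m := μ.part 0 with hm
  have hset : {p : ℕ × ℕ | p.2 < μ.part p.1} =
      ↑((Finset.range n ×ˢ Finset.range m).filter (fun p => p.2 < μ.part p.1)) := by
    ext p
    simp only [Set.mem_setOf_eq, Finset.coe_filter, Finset.mem_product, Finset.mem_range]
    constructor
    · intro hp
      refine ⟨⟨?_, ?_⟩, hp⟩
      · by_contra h1
        have := hz p.1 (by omega)
        omega
      · exact lt_of_lt_of_le hp (μ.anti (Nat.zero_le p.1))
    · exact fun hp => hp.2
  have h1 : μ.size = Set.ncard {p : ℕ × ℕ | p.2 < μ.part p.1} := by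
    rw [Yd.size, ← Nat.card_coe_set_eq]
    rfl
  rw [h1, hset, Set.ncard_coe_finset, Finset.card_filter, Finset.sum_product]
  apply Finset.sum_congr rfl
  intro i hi
  rw [← Finset.card_filter]
  have hle : μ.part i ≤ m := μ.anti (Nat.zero_le i)
  have : (Finset.range m).filter (fun j => j < μ.part i) = Finset.range (μ.part i) := by
    ext j; simp only [Finset.mem_filter, Finset.mem_range]; omega
  rw [this, Finset.card_range]

lemma Gamma_poch (w : ℝ) (hw : 0 < w) (n : ℕ) :
    Real.Gamma (w + n) = Real.Gamma w * pochR w n := by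
  induction n with
  | zero => simp [pochR]
  | succ n ih =>
    have h1 : w + ((n : ℕ) + 1 : ℕ) = (w + n) + 1 := by push_cast; ring
    rw [h1, Real.Gamma_add_one (by positivity), ih, pochR, pochR, Finset.prod_range_succ]
    ring

lemma factorial_poch (m n : ℕ) :
    (((m + n).factorial : ℕ) : ℝ) = (m.factorial : ℝ) * pochR ((m : ℝ) + 1) n := by
  induction n with
  | zero => simp [pochR]
  | succ n ih =>
    have : m + (n + 1) = (m + n) + 1 := by omega
    rw [this, Nat.factorial_succ, pochR, Finset.prod_range_succ, ← pochR]
    push_cast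
    rw [ih]
    ring

lemma pochC_ofReal (w : ℝ) (n : ℕ) : pochC (w : ℂ) n = ((pochR w n : ℝ) : ℂ) := by
  rw [pochC, pochR, Complex.ofReal_prod]
  exact Finset.prod_congr rfl fun k _ => by push_cast; ring


noncomputable def vandR (f : ℕ → ℕ) (n : ℕ) : ℝ :=
  ∏ i ∈ Finset.range n, ∏ j ∈ Finset.range n,
    if i < j then ((f i : ℝ) - i) - ((f j : ℝ) - j) else 1

lemma vandR_succ (f : ℕ → ℕ) (M : ℕ) :
    vandR f (M + 1) = vandR f M * ∏ i ∈ Finset.range M, (((f i : ℝ) - i) - ((f M : ℝ) - M)) := by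
  rw [vandR, Finset.prod_range_succ]
  have h1 : (∏ j ∈ Finset.range (M+1),
      if M < j then ((f M : ℝ) - M) - ((f j : ℝ) - j) else 1) = 1 := by
    apply Finset.prod_eq_one
    intro j hj
    rw [Finset.mem_range] at hj
    rw [if_neg (by omega)]
  rw [h1, mul_one]
  rw [show (∏ i ∈ Finset.range M, ∏ j ∈ Finset.range (M+1),
      if i < j then ((f i : ℝ) - i) - ((f j : ℝ) - j) else 1)
    = ∏ i ∈ Finset.range M, ((∏ j ∈ Finset.range M,
      if i < j then ((f i : ℝ) - i) - ((f j : ℝ) - j) else 1) *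
      (((f i : ℝ) - i) - ((f M : ℝ) - M))) from
    Finset.prod_congr rfl fun i hi => by
      rw [Finset.prod_range_succ, if_pos (Finset.mem_range.mp hi)]]
  rw [Finset.prod_mul_distrib, vandR]

lemma vandR_inv (f : ℕ → ℕ) (L : ℕ) (hf : ∀ i, L ≤ i → f i = 0) :
    ∀ M, L ≤ M →
    vandR f M * ∏ i ∈ Finset.range L, ((f i + (L - 1 - i)).factorial : ℝ)
      = vandR f L * ∏ i ∈ Finset.range M, ((f i + (M - 1 - i)).factorial : ℝ) := by
  intro M hM
  induction M, hM using Nat.le_induction with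
  | base => rfl
  | succ M hM ih =>
    have hfM : f M = 0 := hf M hM
    have hstep : vandR f (M+1) = vandR f M * ∏ i ∈ Finset.range M,
        ((f i + (M - i) : ℕ) : ℝ) := by
      rw [vandR_succ]
      congr 1
      apply Finset.prod_congr rfl
      intro i hi
      rw [Finset.mem_range] at hi
      rw [hfM]
      push_cast [Nat.cast_sub (by omega : i ≤ M)]
      ring
    have hfac : (∏ i ∈ Finset.range (M+1), ((f i + (M + 1 - 1 - i)).factorial : ℝ))
        = (∏ i ∈ Finset.range M, ((f i + (M - 1 - i)).factorial : ℝ)) *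
          ∏ i ∈ Finset.range M, ((f i + (M - i) : ℕ) : ℝ) := by
      rw [Finset.prod_range_succ]
      have h2 : f M + (M + 1 - 1 - M) = 0 := by omega
      rw [show f M + (M + 1 - 1 - M) = 0 from by omega]
      simp only [Nat.factorial_zero, Nat.cast_one, mul_one]
      rw [← Finset.prod_mul_distrib]
      apply Finset.prod_congr rfl
      intro i hi
      rw [Finset.mem_range] at hi
      rw [show f i + (M + 1 - 1 - i) = (f i + (M - 1 - i)) + 1 from by omega,
        Nat.factorial_succ]
      push_cast
      have h3 : ((M - 1 - i : ℕ) : ℝ) + 1 = ((M - i : ℕ) : ℝ) := by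
        rw [show M - i = (M - 1 - i) + 1 from by omega]
        push_cast
        ring
      rw [← h3]
      ring
    rw [hstep, hfac, mul_right_comm, ih, mul_assoc]

lemma main_real (N : ℕ) (hN : 1 ≤ N) (β ξ : ℝ)
    (hβ : 0 < β) (hξ0 : 0 < ξ) (hξ1 : ξ < 1) (μ : Yd) (hlen : μ.len ≤ N) :
    (1 - ξ) ^ ((N : ℝ) * ((N : ℝ) + β - 1)) * ξ ^ μ.size *
      (∏ i ∈ Finset.range μ.len, pochR ((N : ℝ) - i) (μ.part i)) *
      (∏ i ∈ Finset.range μ.len, pochR ((N : ℝ) + β - 1 - i) (μ.part i)) *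
      (μ.dim / (Nat.factorial μ.size : ℝ)) ^ 2 =
    (Real.rpow (1 - ξ) ((N : ℝ) * ((N : ℝ) + β - 1)) *
        ξ ^ (-((N : ℤ) * ((N : ℤ) - 1) / 2)) *
        ∏ i ∈ Finset.range N,
          Real.Gamma β / (Real.Gamma ((N : ℝ) - i) * Real.Gamma ((N : ℝ) - i - 1 + β))) *
      (∏ i ∈ Finset.range N, meixnerW β ξ (μ.part i + (N - 1 - i))) *
      ∏ i ∈ Finset.range N, ∏ j ∈ Finset.range N,
        if i < j then
          (((μ.part i + (N - 1 - i) : ℕ) : ℝ) - ((μ.part j + (N - 1 - j) : ℕ) : ℝ)) ^ 2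
        else 1 := by
  have hz : ∀ i, μ.len ≤ i → μ.part i = 0 := fun i hi => part_zero_of_len_le μ hi
  have hcast : ∀ i, i < N → ((N - 1 - i : ℕ) : ℝ) = (N : ℝ) - 1 - i := by
    intro i hi
    rw [Nat.cast_sub (by omega), Nat.cast_sub (by omega)]
    push_cast; ring
  have hXNpos : (0:ℝ) < ∏ i ∈ Finset.range N, ((μ.part i + (N - 1 - i)).factorial : ℝ) :=
    Finset.prod_pos fun i _ => by positivity
  have hFNpos : (0:ℝ) < ∏ i ∈ Finset.range N, (((N - 1 - i).factorial : ℕ) : ℝ) :=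
    Finset.prod_pos fun i _ => by positivity
  have hGNpos : (0:ℝ) < ∏ i ∈ Finset.range N, Real.Gamma (((N - 1 - i : ℕ) : ℝ) + β) :=
    Finset.prod_pos fun i _ => Real.Gamma_pos_of_pos (by positivity)
  have hDLpos : (0:ℝ) < ∏ i ∈ Finset.range μ.len, ((μ.part i + (μ.len - 1 - i)).factorial : ℝ) :=
    Finset.prod_pos fun i _ => by positivity
  have hgb : 0 < Real.Gamma β := Real.Gamma_pos_of_pos hβ
  -- dim ratio
  have hdim : μ.dim / (Nat.factorial μ.size : ℝ) =
      vandR μ.part μ.len / ∏ i ∈ Finset.range μ.len, ((μ.part i + (μ.len - 1 - i)).factorial : ℝ) := by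
    have hsf : ((Nat.factorial μ.size : ℕ) : ℝ) ≠ 0 := by positivity
    rw [Yd.dim, vandR, div_right_comm, mul_div_cancel_left₀ _ hsf]
  -- vandermonde invariance as ratio
  have hratio : vandR μ.part μ.len / (∏ i ∈ Finset.range μ.len, ((μ.part i + (μ.len - 1 - i)).factorial : ℝ))
      = vandR μ.part N / ∏ i ∈ Finset.range N, ((μ.part i + (N - 1 - i)).factorial : ℝ) := by
    rw [div_eq_div_iff (ne_of_gt hDLpos) (ne_of_gt hXNpos)]
    linarith [vandR_inv μ.part μ.len hz N hlen]
  -- extend products from len to N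
  have hextA : (∏ i ∈ Finset.range μ.len, pochR ((N : ℝ) - i) (μ.part i))
      = ∏ i ∈ Finset.range N, pochR ((N : ℝ) - i) (μ.part i) := by
    apply Finset.prod_subset (Finset.range_subset_range.mpr hlen)
    intro i _ hi
    rw [Finset.mem_range, not_lt] at hi
    rw [hz i hi]
    simp [pochR]
  have hextB : (∏ i ∈ Finset.range μ.len, pochR ((N : ℝ) + β - 1 - i) (μ.part i))
      = ∏ i ∈ Finset.range N, pochR ((N : ℝ) + β - 1 - i) (μ.part i) := by
    apply Finset.prod_subset (Finset.range_subset_range.mpr hlen)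
    intro i _ hi
    rw [Finset.mem_range, not_lt] at hi
    rw [hz i hi]
    simp [pochR]
  -- A : poch-z product
  have hA : (∏ i ∈ Finset.range N, pochR ((N : ℝ) - i) (μ.part i))
      = (∏ i ∈ Finset.range N, ((μ.part i + (N - 1 - i)).factorial : ℝ))
        / ∏ i ∈ Finset.range N, (((N - 1 - i).factorial : ℕ) : ℝ) := by
    rw [eq_div_iff (ne_of_gt hFNpos), ← Finset.prod_mul_distrib]
    apply Finset.prod_congr rfl
    intro i hi
    rw [Finset.mem_range] at hi
    rw [show μ.part i + (N - 1 - i) = (N - 1 - i) + μ.part i from by omega, factorial_poch]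
    rw [show ((N - 1 - i : ℕ) : ℝ) + 1 = (N : ℝ) - i from by rw [hcast i hi]; ring]
    ring
  -- B : poch-z' product
  have hB : (∏ i ∈ Finset.range N, pochR ((N : ℝ) + β - 1 - i) (μ.part i))
      = (∏ i ∈ Finset.range N, Real.Gamma (β + ((μ.part i + (N - 1 - i) : ℕ) : ℝ)))
        / ∏ i ∈ Finset.range N, Real.Gamma (((N - 1 - i : ℕ) : ℝ) + β) := by
    rw [eq_div_iff (ne_of_gt hGNpos), ← Finset.prod_mul_distrib]
    apply Finset.prod_congr rfl
    intro i hi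
    rw [Finset.mem_range] at hi
    have hw : (0 : ℝ) < ((N - 1 - i : ℕ) : ℝ) + β := by positivity
    have h1 := Gamma_poch (((N - 1 - i : ℕ) : ℝ) + β) hw (μ.part i)
    have h2 : β + ((μ.part i + (N - 1 - i) : ℕ) : ℝ)
        = (((N - 1 - i : ℕ) : ℝ) + β) + (μ.part i : ℕ) := by push_cast; ring
    have h3 : ((N : ℝ) + β - 1 - i) = ((N - 1 - i : ℕ) : ℝ) + β := by
      rw [hcast i hi]; ring
    rw [h2, h1, h3]
    ring
  -- T facts
  have h2T : N * (N - 1) = 2 * (N * (N - 1) / 2) := by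
    obtain ⟨k, hk⟩ := Nat.even_mul_succ_self (N - 1)
    have ha : N * (N - 1) = (N - 1) * (N - 1 + 1) := by
      rw [Nat.sub_add_cancel hN, Nat.mul_comm]
    omega
  have hE : ξ ^ (-((N : ℤ) * ((N : ℤ) - 1) / 2)) = (ξ ^ (N * (N - 1) / 2))⁻¹ := by
    have h0 : ((N * (N - 1) : ℕ) : ℤ) = 2 * ((N * (N - 1) / 2 : ℕ) : ℤ) := by
      exact_mod_cast h2T
    have h1 : (N : ℤ) * ((N : ℤ) - 1) = 2 * ((N * (N - 1) / 2 : ℕ) : ℤ) := by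
      rw [← h0]
      push_cast [Nat.cast_sub hN]
      ring
    have h2 : -((N : ℤ) * ((N : ℤ) - 1) / 2) = -((N * (N - 1) / 2 : ℕ) : ℤ) := by
      rw [h1]; omega
    rw [h2, zpow_neg, zpow_natCast]
  -- sum of x
  have hsum : ∑ i ∈ Finset.range N, (μ.part i + (N - 1 - i)) = μ.size + N * (N - 1) / 2 := by
    rw [Finset.sum_add_distrib, ← size_eq_sum μ hlen]
    congr 1
    have hrefl := Finset.sum_range_reflect (fun i => i) N
    rw [hrefl, Finset.sum_range_id]
  -- meixner product
  have hW : (∏ i ∈ Finset.range N, meixnerW β ξ (μ.part i + (N - 1 - i)))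
      = (∏ i ∈ Finset.range N, Real.Gamma (β + ((μ.part i + (N - 1 - i) : ℕ) : ℝ)))
          * (ξ ^ μ.size * ξ ^ (N * (N - 1) / 2))
        / ((Real.Gamma β) ^ N * ∏ i ∈ Finset.range N, ((μ.part i + (N - 1 - i)).factorial : ℝ)) := by
    simp only [meixnerW]
    rw [Finset.prod_div_distrib, Finset.prod_mul_distrib, Finset.prod_mul_distrib,
      Finset.prod_const, Finset.card_range, Finset.prod_pow_eq_pow_sum, hsum, pow_add]
  -- constant product
  have hC : (∏ i ∈ Finset.range N,
        Real.Gamma β / (Real.Gamma ((N : ℝ) - i) * Real.Gamma ((N : ℝ) - i - 1 + β)))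
      = (Real.Gamma β) ^ N /
        ((∏ i ∈ Finset.range N, (((N - 1 - i).factorial : ℕ) : ℝ))
          * ∏ i ∈ Finset.range N, Real.Gamma (((N - 1 - i : ℕ) : ℝ) + β)) := by
    rw [Finset.prod_div_distrib, Finset.prod_const, Finset.card_range,
      Finset.prod_mul_distrib]
    have e1 : (∏ i ∈ Finset.range N, Real.Gamma ((N : ℝ) - i))
        = ∏ i ∈ Finset.range N, (((N - 1 - i).factorial : ℕ) : ℝ) := by
      apply Finset.prod_congr rfl
      intro i hi
      rw [Finset.mem_range] at hi
      rw [show (N : ℝ) - i = ((N - 1 - i : ℕ) : ℝ) + 1 from by rw [hcast i hi]; ring,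
        Real.Gamma_nat_eq_factorial]
    have e2 : (∏ i ∈ Finset.range N, Real.Gamma ((N : ℝ) - i - 1 + β))
        = ∏ i ∈ Finset.range N, Real.Gamma (((N - 1 - i : ℕ) : ℝ) + β) := by
      apply Finset.prod_congr rfl
      intro i hi
      rw [Finset.mem_range] at hi
      rw [hcast i hi]
      ring_nf
    rw [e1, e2]
  -- vandermonde square
  have hVd : (∏ i ∈ Finset.range N, ∏ j ∈ Finset.range N,
        if i < j then
          (((μ.part i + (N - 1 - i) : ℕ) : ℝ) - ((μ.part j + (N - 1 - j) : ℕ) : ℝ)) ^ 2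
        else 1) = (vandR μ.part N) ^ 2 := by
    rw [vandR, ← Finset.prod_pow]
    apply Finset.prod_congr rfl
    intro i hi
    rw [← Finset.prod_pow]
    apply Finset.prod_congr rfl
    intro j hj
    rw [Finset.mem_range] at hi hj
    by_cases hij : i < j
    · rw [if_pos hij, if_pos hij]
      congr 1
      push_cast [hcast i hi, hcast j hj]
      ring
    · rw [if_neg hij, if_neg hij, one_pow]
  -- final assembly
  rw [hdim, hratio, hextA, hextB, hA, hB, hE, hC, hW, hVd]
  rw [show Real.rpow (1 - ξ) ((N : ℝ) * ((N : ℝ) + β - 1))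
      = (1 - ξ) ^ ((N : ℝ) * ((N : ℝ) + β - 1)) from rfl]
  have hξT : (0:ℝ) < ξ ^ (N * (N - 1) / 2) := by positivity
  field_simp

end ZMeasureAux

/-- For `z = N`, `z' = N + β - 1` (degenerate series), the z-measure of a
partition `λ` with `ℓ(λ) ≤ N` equals `const_N · ∏ W_{β,ξ}(x_i) · ∏_{i<j} (x_i - x_j)²`,
where `x_i = λ_i + N - i` (here written 0-based: `x_i = λ_{i+1} + N - 1 - i`), i.e. the
z-measure turns into the `N`-point Meixner orthogonal polynomial ensemble. -/
theorem zMeasure_eq_meixner_ensemble (N : ℕ) (hN : 1 ≤ N) (β ξ : ℝ)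
    (hβ : 0 < β) (hξ0 : 0 < ξ) (hξ1 : ξ < 1) (μ : Yd) (hlen : μ.len ≤ N) :
    zWt (N : ℂ) ((N : ℂ) + (β : ℂ) - 1) (ξ : ℂ) μ =
      (((Real.rpow (1 - ξ) ((N : ℝ) * ((N : ℝ) + β - 1)) *
            ξ ^ (-((N : ℤ) * ((N : ℤ) - 1) / 2)) *
            ∏ i ∈ Finset.range N,
              Real.Gamma β / (Real.Gamma ((N : ℝ) - i) * Real.Gamma ((N : ℝ) - i - 1 + β))) *
          (∏ i ∈ Finset.range N, meixnerW β ξ (μ.part i + (N - 1 - i))) *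
          ∏ i ∈ Finset.range N, ∏ j ∈ Finset.range N,
            if i < j then
              (((μ.part i + (N - 1 - i) : ℕ) : ℝ) - ((μ.part j + (N - 1 - j) : ℕ) : ℝ)) ^ 2
            else 1 : ℝ) : ℂ) := by
  rw [zWt, pochY, pochY]
  have hc1 : (1 - (ξ:ℂ)) ^ ((N:ℂ) * ((N:ℂ) + (β:ℂ) - 1))
      = ((((1-ξ) ^ ((N:ℝ)*((N:ℝ)+β-1)) : ℝ)) : ℂ) := by
    rw [show (1 - (ξ:ℂ)) = (((1-ξ : ℝ)) : ℂ) from by push_cast; ring,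
      show ((N:ℂ) * ((N:ℂ) + (β:ℂ) - 1)) = ((((N:ℝ)*((N:ℝ)+β-1)) : ℝ) : ℂ) from by
        push_cast; ring,
      ← Complex.ofReal_cpow (by linarith)]
  have hp1 : (∏ i ∈ Finset.range μ.len, pochC ((N:ℂ) - i) (μ.part i))
      = ((∏ i ∈ Finset.range μ.len, pochR ((N:ℝ) - i) (μ.part i) : ℝ) : ℂ) := by
    rw [Complex.ofReal_prod]
    apply Finset.prod_congr rfl
    intro i _
    rw [show ((N:ℂ) - i) = ((((N:ℝ) - i : ℝ)) : ℂ) from by push_cast; ring,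
      ZMeasureAux.pochC_ofReal]
  have hp2 : (∏ i ∈ Finset.range μ.len, pochC ((N:ℂ) + (β:ℂ) - 1 - i) (μ.part i))
      = ((∏ i ∈ Finset.range μ.len, pochR ((N:ℝ) + β - 1 - i) (μ.part i) : ℝ) : ℂ) := by
    rw [Complex.ofReal_prod]
    apply Finset.prod_congr rfl
    intro i _
    rw [show ((N:ℂ) + (β:ℂ) - 1 - i) = ((((N:ℝ) + β - 1 - i : ℝ)) : ℂ) from by push_cast; ring,
      ZMeasureAux.pochC_ofReal]
  rw [hc1, hp1, hp2]
  exact_mod_cast ZMeasureAux.main_real N hN β ξ hβ hξ0 hξ1 μ hlen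
end

section
/- For all A, B ∈ ℂ, every integer M, every ξ ∈ (0,1), and every radius r with √ξ < r < 1/√ξ: (1/(2πi)) ∮_{|ω|=r} (1−√ξ·ω)^{A−1} (1−√ξ/ω)^{−B} ω^{−M−1} dω = ξ^{M/2} · Σ_{l ≥ max(0,−M)} (1−A)_{l+M} (B)_l ξ^{l} / ((l+M)! · l!), where the series on the right converges absolutely. (Equivalently, this is the integral representation for the Gauss hypergeometric function F(A, B; M+1; ξ/(ξ−1))/Γ(M+1).) -/
set_option maxHeartbeats 1000000

open Complex Metric

lemma pochC_succ (w : ℂ) (n : ℕ) : pochC w (n+1) = pochC w n * (w + n) :=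
  Finset.prod_range_succ _ _

lemma slit_aux {z : ℂ} (hz : ‖z‖ < 1) : (1 - z) ∈ Complex.slitPlane := by
  rw [sub_eq_add_neg]
  exact Complex.mem_slitPlane_of_norm_lt_one (by simpa using hz)

lemma hasDerivAt_aux (w : ℂ) {z : ℂ} (hz : ‖z‖ < 1) :
    HasDerivAt (fun z : ℂ => (1 - z) ^ (-w)) (w * (1 - z) ^ (-(w+1))) z := by
  have := (((hasDerivAt_id z).const_sub 1)).cpow_const (c := -w) (slit_aux hz)
  convert this using 1
  simp only [id]
  rw [show -w - 1 = -(w+1) by ring]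
  ring_nf
  rfl

lemma iteratedDeriv_aux (w : ℂ) (n : ℕ) {z : ℂ} (hz : ‖z‖ < 1) :
    iteratedDeriv n (fun z : ℂ => (1 - z) ^ (-w)) z
      = pochC w n * (1 - z) ^ (-(w + n)) := by
  induction n generalizing z with
  | zero => simp [pochC]
  | succ n ih =>
      rw [iteratedDeriv_succ]
      have hev : (iteratedDeriv n (fun z : ℂ => (1 - z) ^ (-w)))
          =ᶠ[nhds z] (fun z => pochC w n * (1 - z) ^ (-(w + n))) := by
        filter_upwards [Metric.ball_mem_nhds z (by linarith [norm_nonneg z] : (0:ℝ) < 1 - ‖z‖)]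
          with y hy
        have hy1 : ‖y‖ < 1 := by
          have := mem_ball_iff_norm.mp hy
          calc ‖y‖ ≤ ‖y - z‖ + ‖z‖ := by simpa using norm_add_le (y - z) z
            _ < 1 := by linarith
        exact ih hy1
      rw [hev.deriv_eq]
      have := ((hasDerivAt_aux (w + n) hz).const_mul (pochC w n)).deriv
      rw [this, pochC_succ]
      push_cast
      ring_nf

/-- Generalized binomial series. -/
lemma hasSum_binom (w : ℂ) {z : ℂ} (hz : ‖z‖ < 1) :
    HasSum (fun n : ℕ => pochC w n / n.factorial * z ^ n) ((1 - z) ^ (-w)) := by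
  have hdiff : DifferentiableOn ℂ (fun z : ℂ => (1 - z) ^ (-w)) (Metric.ball 0 1) := by
    intro y hy
    exact ((hasDerivAt_aux w (by simpa using hy)).differentiableAt).differentiableWithinAt
  have H := Complex.hasSum_taylorSeries_on_ball hdiff (by simpa using hz)
  have : ∀ n : ℕ, (n.factorial : ℂ)⁻¹ • (z - 0) ^ n •
      iteratedDeriv n (fun z : ℂ => (1 - z) ^ (-w)) 0
      = pochC w n / n.factorial * z ^ n := by
    intro n
    rw [iteratedDeriv_aux w n (by simp)]
    simp [smul_eq_mul, Complex.one_cpow]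
    ring
  rw [show ((1:ℂ) - z) ^ (-w) = (fun z : ℂ => (1 - z) ^ (-w)) z from rfl]
  exact H.congr_fun fun n => (this n).symm

lemma pochC_ofReal (x : ℝ) (n : ℕ) :
    pochC (x : ℂ) n = ((∏ k ∈ Finset.range n, (x + k) : ℝ) : ℂ) := by
  rw [pochC]; push_cast; rfl

lemma summable_norm_binom (w : ℂ) {x : ℝ} (h0 : 0 ≤ x) (hx : x < 1) :
    Summable (fun n : ℕ => ‖pochC w n / n.factorial‖ * x ^ n) := by
  have hC : Summable (fun n : ℕ => pochC (‖w‖ : ℂ) n / n.factorial * (x : ℂ) ^ n) :=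
    (hasSum_binom (‖w‖ : ℂ) (z := (x : ℂ)) (by rwa [Complex.norm_real, Real.norm_of_nonneg h0])).summable
  have hR : Summable (fun n : ℕ =>
      ((∏ k ∈ Finset.range n, (‖w‖ + k) : ℝ) / n.factorial * x ^ n)) := by
    have := (Complex.reCLM : ℂ →L[ℝ] ℝ).summable hC
    refine this.congr fun n => ?_
    rw [pochC_ofReal]
    rw [show ((n.factorial : ℂ)) = ((n.factorial : ℝ) : ℂ) by push_cast; rfl,
      ← Complex.ofReal_pow, ← Complex.ofReal_div, ← Complex.ofReal_mul, Complex.reCLM_apply,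
      Complex.ofReal_re]
  refine Summable.of_nonneg_of_le (fun n => by positivity) (fun n => ?_) hR
  have h1 : ‖pochC w n‖ ≤ ∏ k ∈ Finset.range n, (‖w‖ + k) := by
    rw [pochC]
    rw [norm_prod]
    refine le_of_eq (rfl) |>.trans ?_
    refine Finset.prod_le_prod (fun k _ => norm_nonneg _) (fun k _ => ?_)
    simpa using norm_add_le w (k : ℂ)
  have h2 : ‖pochC w n / (n.factorial : ℂ)‖ ≤ (∏ k ∈ Finset.range n, (‖w‖ + k)) / n.factorial := by
    rw [norm_div]
    have : ‖(n.factorial : ℂ)‖ = (n.factorial : ℝ) := by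
      rw [show ((n.factorial : ℂ)) = ((n.factorial : ℝ) : ℂ) by push_cast; rfl,
        Complex.norm_real, Real.norm_of_nonneg (by positivity)]
    rw [this]
    exact div_le_div_of_nonneg_right h1 (by positivity)
  exact mul_le_mul_of_nonneg_right h2 (pow_nonneg h0 n)

/-- For all `A, B ∈ ℂ`, `M ∈ ℤ`, `ξ ∈ (0,1)` and any radius
`√ξ < r < 1/√ξ`:
`(1/2πi) ∮_{|ω|=r} (1 - √ξ ω)^{A-1} (1 - √ξ/ω)^{-B} ω^{-M-1} dω
  = ξ^{M/2} Σ_{l ≥ max(0,-M)} (1-A)_{l+M} (B)_l ξ^l / ((l+M)! l!)`,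
the series converging absolutely; complex powers are principal branches. -/
theorem contour_integral_hypergeometric (A B : ℂ) (M : ℤ) (ξ : ℝ)
    (hξ0 : 0 < ξ) (hξ1 : ξ < 1) (r : ℝ)
    (hr1 : Real.sqrt ξ < r) (hr2 : r < 1 / Real.sqrt ξ) :
    Summable (fun l : ℕ =>
      if 0 ≤ (l : ℤ) + M then
        pochC (1 - A) ((l : ℤ) + M).toNat * pochC B l * (ξ : ℂ) ^ l /
          ((Nat.factorial ((l : ℤ) + M).toNat : ℂ) * (Nat.factorial l : ℂ))
      else 0) ∧
    (2 * (Real.pi : ℂ) * Complex.I)⁻¹ *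
        (∮ ω in C(0, r), (1 - (Real.sqrt ξ : ℂ) * ω) ^ (A - 1) *
          (1 - (Real.sqrt ξ : ℂ) / ω) ^ (-B) * ω ^ (-M - 1 : ℤ))
      = ((Real.rpow ξ ((M : ℝ) / 2) : ℝ) : ℂ) *
        ∑' l : ℕ,
          if 0 ≤ (l : ℤ) + M then
            pochC (1 - A) ((l : ℤ) + M).toNat * pochC B l * (ξ : ℂ) ^ l /
              ((Nat.factorial ((l : ℤ) + M).toNat : ℂ) * (Nat.factorial l : ℂ))
          else 0 := by
  set s : ℝ := Real.sqrt ξ with hs_def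
  have hs0 : 0 < s := Real.sqrt_pos.mpr hξ0
  have hs1 : s < 1 := by
    rw [hs_def, show (1:ℝ) = Real.sqrt 1 by simp]
    exact Real.sqrt_lt_sqrt hξ0.le hξ1
  have hr0 : 0 < r := hs0.trans hr1
  have hsr : s * r < 1 := by
    have := (lt_div_iff₀ hs0).mp hr2
    linarith [mul_comm r s]
  have hsr' : s / r < 1 := (div_lt_one hr0).mpr hr1
  -- coefficient sequences
  set a : ℕ → ℂ := fun n => pochC (1 - A) n / n.factorial with ha_def
  set b : ℕ → ℂ := fun l => pochC B l / l.factorial with hb_def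
  -- term family over pairs
  set T : ℕ × ℕ → ℂ → ℂ := fun p ω =>
    (a p.1 * ((s:ℂ) * ω) ^ p.1 * (b p.2 * ((s:ℂ) / ω) ^ p.2)) * ω ^ (-M - 1 : ℤ) with hT_def
  -- Step A: pointwise HasSum on the circle
  have stepA : ∀ ω : ℂ, ω ∈ Metric.sphere (0:ℂ) r →
      HasSum (fun p => T p ω)
        ((1 - (s:ℂ) * ω) ^ (A - 1) * (1 - (s:ℂ) / ω) ^ (-B) * ω ^ (-M - 1 : ℤ)) := by
    intro ω hω
    have hωr : ‖ω‖ = r := by simpa using hω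
    have hω0 : ω ≠ 0 := by
      intro h; rw [h] at hωr; simp at hωr; exact hr0.ne' hωr.symm
    have hz1 : ‖(s:ℂ) * ω‖ < 1 := by
      rw [norm_mul, Complex.norm_real, Real.norm_of_nonneg hs0.le, hωr]; exact hsr
    have hz2 : ‖(s:ℂ) / ω‖ < 1 := by
      rw [norm_div, Complex.norm_real, Real.norm_of_nonneg hs0.le, hωr]; exact hsr'
    have h1 : HasSum (fun n => a n * ((s:ℂ) * ω) ^ n) ((1 - (s:ℂ) * ω) ^ (A - 1)) := by
      have := hasSum_binom (1 - A) hz1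
      rwa [neg_sub] at this
    have h2 : HasSum (fun l => b l * ((s:ℂ) / ω) ^ l) ((1 - (s:ℂ) / ω) ^ (-B)) :=
      hasSum_binom B hz2
    have hn1 : Summable (fun n => ‖a n * ((s:ℂ) * ω) ^ n‖) := by
      refine (summable_norm_binom (1 - A) (mul_nonneg hs0.le hr0.le) hsr).congr fun n => ?_
      rw [norm_mul, norm_pow, norm_mul, Complex.norm_real, Real.norm_of_nonneg hs0.le, hωr]
    have hn2 : Summable (fun l => ‖b l * ((s:ℂ) / ω) ^ l‖) := by
      refine (summable_norm_binom B (div_nonneg hs0.le hr0.le) hsr').congr fun l => ?_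
      rw [norm_mul, norm_pow,
        show ‖(s:ℂ)/ω‖ = s / r by
          rw [norm_div, Complex.norm_real, Real.norm_of_nonneg hs0.le, hωr]]
    have hmul := (h1.mul h2 ((hn1.mul_norm hn2).of_norm)).mul_right (ω ^ (-M - 1 : ℤ))
    exact hmul
  -- Step B: value of each circle integral
  have stepB : ∀ p : ℕ × ℕ, (∮ z in C(0, r), T p z)
      = if (p.1 : ℤ) = p.2 + M then
          (2 * (Real.pi:ℂ) * Complex.I) * (a p.1 * b p.2 * (s:ℂ) ^ (p.1 + p.2)) else 0 := by
    rintro ⟨n, l⟩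
    dsimp only
    have hEq : Set.EqOn (T (n, l))
        (fun z => (a n * b l * (s:ℂ) ^ (n + l)) • (z - 0) ^ ((n : ℤ) - l - M - 1))
        (Metric.sphere (0:ℂ) r) := by
      intro z hz
      have hzr : ‖z‖ = r := by simpa using hz
      have hz0 : z ≠ 0 := by
        intro h; rw [h] at hzr; simp at hzr; exact hr0.ne' hzr.symm
      simp only [hT_def, smul_eq_mul, sub_zero]
      have key : ((s:ℂ) * z) ^ n * (((s:ℂ) / z) ^ l * z ^ (-M - 1 : ℤ))
          = (s:ℂ) ^ (n + l) * z ^ ((n : ℤ) - l - M - 1) := by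
        rw [mul_pow, div_pow, pow_add,
          show ((n:ℤ) - l - M - 1) = (n:ℤ) + (-(l:ℤ)) + (-M - 1) by ring,
          zpow_add₀ hz0, zpow_add₀ hz0, zpow_natCast, zpow_neg, zpow_natCast]
        field_simp
      calc a n * ((s:ℂ) * z) ^ n * (b l * ((s:ℂ) / z) ^ l) * z ^ (-M - 1 : ℤ)
          = a n * b l * (((s:ℂ) * z) ^ n * (((s:ℂ) / z) ^ l * z ^ (-M - 1 : ℤ))) := by ring
        _ = a n * b l * ((s:ℂ) ^ (n + l) * z ^ ((n : ℤ) - l - M - 1)) := by rw [key]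
        _ = a n * b l * (s:ℂ) ^ (n + l) * z ^ ((n : ℤ) - l - M - 1) := by ring
    rw [circleIntegral.integral_congr hr0.le hEq, circleIntegral.integral_smul]
    by_cases h : (n:ℤ) = l + M
    · have hk : (n:ℤ) - l - M - 1 = -1 := by omega
      rw [hk, if_pos h]
      have h2 := circleIntegral.integral_sub_inv_of_mem_ball
        (Metric.mem_ball_self hr0 : (0:ℂ) ∈ Metric.ball (0:ℂ) r)
      have h3 : (∮ z in C(0, r), (z - 0) ^ (-1 : ℤ)) = (2 * Real.pi * Complex.I : ℂ) := by
        rw [← h2]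
        exact circleIntegral.integral_congr hr0.le fun z hz => by simp [zpow_neg_one]
      rw [h3, smul_eq_mul]
      ring
    · have hk : (n:ℤ) - l - M - 1 ≠ -1 := by omega
      rw [circleIntegral.integral_sub_zpow_of_ne hk, if_neg h, smul_zero]

  -- Step C: swap sum and integral
  have stepC : HasSum (fun p : ℕ × ℕ => ∮ z in C(0, r), T p z)
      (∮ ω in C(0, r), (1 - (s:ℂ) * ω) ^ (A - 1) * (1 - (s:ℂ) / ω) ^ (-B) *
        ω ^ (-M - 1 : ℤ)) := by
    have hA : Summable (fun n : ℕ => ‖a n‖ * (s*r)^n) := by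
      refine (summable_norm_binom (1-A) (mul_nonneg hs0.le hr0.le) hsr).congr fun n => rfl
    have hB : Summable (fun l : ℕ => ‖b l‖ * (s/r)^l) := by
      refine (summable_norm_binom B (div_nonneg hs0.le hr0.le) hsr').congr fun l => rfl
    have hsum_bound : Summable (fun p : ℕ×ℕ =>
        (‖a p.1‖ * (s*r)^p.1) * (‖b p.2‖ * (s/r)^p.2)) :=
      Summable.mul_of_nonneg hA hB (fun n => by positivity) (fun l => by positivity)
    have hcm0 : ∀ θ : ℝ, circleMap 0 r θ ≠ 0 := fun θ => circleMap_ne_center hr0.ne'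
    have hωr : ∀ θ : ℝ, ‖circleMap 0 r θ‖ = r := fun θ => by
      simp [norm_circleMap_zero, abs_of_pos hr0]
    have hTnorm : ∀ (p : ℕ×ℕ) (θ : ℝ), ‖T p (circleMap 0 r θ)‖
        = (‖a p.1‖ * (s*r)^p.1) * ((‖b p.2‖ * (s/r)^p.2) * r ^ (-M-1:ℤ)) := by
      intro p θ
      simp only [hT_def]
      rw [show (-M - 1 : ℤ) = -M-1 from rfl]
      simp only [norm_mul, norm_pow, norm_zpow, norm_div, Complex.norm_real,
        Real.norm_of_nonneg hs0.le, hωr θ]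
      rw [mul_pow, div_pow]
      ring
    simp only [circleIntegral]
    refine intervalIntegral.hasSum_integral_of_dominated_convergence
      (fun p _ => (r * r ^ (-M-1:ℤ)) * ((‖a p.1‖ * (s*r)^p.1) * (‖b p.2‖ * (s/r)^p.2)))
      (fun p => ?_) (fun p => ?_) ?_ ?_ ?_
    · -- measurability
      apply Continuous.aestronglyMeasurable
      have hc : Continuous (circleMap 0 r) := continuous_circleMap 0 r
      have h1 : Continuous (fun θ => deriv (circleMap 0 r) θ) := by
        simp only [deriv_circleMap]
        exact (hc.mul continuous_const)
      refine h1.smul ?_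
      simp only [hT_def]
      refine ((continuous_const.mul ((continuous_const.mul hc).pow _)).mul
        (continuous_const.mul ((continuous_const.div hc fun θ => hcm0 θ).pow _))).mul ?_
      exact hc.zpow₀ _ (fun θ => Or.inl (hcm0 θ))
    · -- bound
      refine Filter.Eventually.of_forall fun θ _ => le_of_eq ?_
      rw [norm_smul, hTnorm p θ, deriv_circleMap, norm_mul, Complex.norm_I, mul_one, hωr θ]
      generalize (r:ℝ) ^ (-M-1:ℤ) = c
      ring
    · -- summable
      refine Filter.Eventually.of_forall fun θ _ => ?_
      exact hsum_bound.mul_left _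
    · exact intervalIntegrable_const
    · refine Filter.Eventually.of_forall fun θ _ => ?_
      exact (stepA _ (circleMap_mem_sphere 0 hr0.le θ)).const_smul _
  -- Step D/E: reindex to single sum
  set S : ℂ := ∮ ω in C(0, r), (1 - (s:ℂ) * ω) ^ (A - 1) * (1 - (s:ℂ) / ω) ^ (-B) *
    ω ^ (-M - 1 : ℤ) with hS_def
  have hS : HasSum (fun p : ℕ × ℕ => if (p.1 : ℤ) = p.2 + M then
      (2 * (Real.pi:ℂ) * Complex.I) * (a p.1 * b p.2 * (s:ℂ) ^ (p.1 + p.2)) else 0) S :=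
    stepC.congr_fun fun p => (stepB p).symm
  set ι : ℕ → ℕ × ℕ := fun l => (((l:ℤ) + M).toNat, l) with hι_def
  have hinj : Function.Injective ι := by
    intro l1 l2 h
    have := congrArg Prod.snd h
    simpa [hι_def] using this
  have hzero : ∀ p : ℕ × ℕ, p ∉ Set.range ι →
      (if (p.1 : ℤ) = p.2 + M then
        (2 * (Real.pi:ℂ) * Complex.I) * (a p.1 * b p.2 * (s:ℂ) ^ (p.1 + p.2)) else 0) = 0 := by
    rintro ⟨n, l⟩ hp
    rw [if_neg]
    intro h
    exact hp ⟨l, by simp only [hι_def, Prod.mk.injEq]; exact ⟨by omega, trivial⟩⟩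
  have hS2 := (hinj.hasSum_iff hzero).mpr hS
  set cast : ℂ := ((Real.rpow ξ ((M : ℝ) / 2) : ℝ) : ℂ) with hcast_def
  set t : ℕ → ℂ := fun l =>
    if 0 ≤ (l : ℤ) + M then
      pochC (1 - A) ((l : ℤ) + M).toNat * pochC B l * (ξ : ℂ) ^ l /
        ((Nat.factorial ((l : ℤ) + M).toNat : ℂ) * (Nat.factorial l : ℂ))
    else 0 with ht_def
  have hterm : ∀ l : ℕ, ((fun p : ℕ × ℕ => if (p.1 : ℤ) = p.2 + M then
      (2 * (Real.pi:ℂ) * Complex.I) * (a p.1 * b p.2 * (s:ℂ) ^ (p.1 + p.2)) else 0) ∘ ι) l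
      = ((2 * (Real.pi:ℂ) * Complex.I) * cast) * t l := by
    intro l
    simp only [Function.comp, hι_def, ht_def]
    by_cases h : 0 ≤ (l : ℤ) + M
    · set n : ℕ := ((l:ℤ) + M).toNat with hn_def
      have hn : (n : ℤ) = (l : ℤ) + M := Int.toNat_of_nonneg h
      rw [if_pos (by exact_mod_cast hn), if_pos h]
      have hreal : (s : ℝ) ^ (n + l) = ξ ^ ((M : ℝ) / 2) * ξ ^ l := by
        have h1 : (s : ℝ) ^ (n + l) = ξ ^ ((1/2) * ((n : ℝ) + l)) := by
          rw [hs_def, Real.sqrt_eq_rpow, ← Real.rpow_natCast (ξ ^ (1/2 : ℝ)) (n + l),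
            ← Real.rpow_mul hξ0.le]
          push_cast
          ring_nf
        have h2 : ξ ^ ((M : ℝ) / 2) * (ξ:ℝ) ^ l = ξ ^ ((M : ℝ) / 2 + l) := by
          rw [← Real.rpow_natCast ξ l, ← Real.rpow_add hξ0]
        rw [h1, h2]
        congr 1
        have : (n : ℝ) = (l : ℝ) + (M : ℝ) := by exact_mod_cast congrArg (Int.cast : ℤ → ℝ) hn
        rw [this]; ring
      have hcplx : ((s : ℝ) : ℂ) ^ (n + l) = cast * (ξ : ℂ) ^ l := by
        rw [hcast_def, show Real.rpow ξ ((M:ℝ)/2) = ξ ^ ((M:ℝ)/2) from rfl,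
          ← Complex.ofReal_pow, hreal]
        push_cast
        ring
      rw [ha_def, hb_def]
      simp only
      rw [hcplx]
      have hf1 : ((n.factorial : ℕ) : ℂ) ≠ 0 := Nat.cast_ne_zero.mpr n.factorial_ne_zero
      have hf2 : ((l.factorial : ℕ) : ℂ) ≠ 0 := Nat.cast_ne_zero.mpr l.factorial_ne_zero
      field_simp
    · rw [if_neg (fun hc => h (by omega)), if_neg h, mul_zero]
  have hS3 : HasSum (fun l => ((2 * (Real.pi:ℂ) * Complex.I) * cast) * t l) S :=
    hS2.congr_fun fun l => (hterm l).symm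
  have hC_ne : ((2 * (Real.pi:ℂ) * Complex.I) * cast) ≠ 0 := by
    apply mul_ne_zero
    · simp [Real.pi_ne_zero, Complex.I_ne_zero]
    · rw [hcast_def]
      exact_mod_cast (Real.rpow_pos_of_pos hξ0 _).ne'
  have ht : HasSum t ((((2 * (Real.pi:ℂ) * Complex.I) * cast))⁻¹ * S) :=
    (hS3.mul_left _).congr_fun fun l => by
      rw [← mul_assoc, inv_mul_cancel₀ hC_ne, one_mul]
  refine ⟨ht.summable, ?_⟩
  rw [ht.tsum_eq]
  have h2pi : (2 * (Real.pi:ℂ) * Complex.I) ≠ 0 := by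
    simp [Real.pi_ne_zero, Complex.I_ne_zero]
  have hcast_ne : cast ≠ 0 := by
    rw [hcast_def]
    exact_mod_cast (Real.rpow_pos_of_pos hξ0 _).ne'
  field_simp
end

section
/- Let 0 < ξ < 1 and let (z, z′) be in the principal or complementary series. Then for every a ∈ ℤ′ the function ψ_a(·; z, z′, ξ) is an eigenfunction of the difference operator D(z,z′,ξ) with eigenvalue a(1−ξ); that is, for all x ∈ ℤ′: √(ξ(z+x+1/2)(z′+x+1/2))·ψ_a(x+1) + √(ξ(z+x−1/2)(z′+x−1/2))·ψ_a(x−1) − (x + ξ(z+z′+x))·ψ_a(x) = a(1−ξ)·ψ_a(x). -/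
open Complex Metric Set


/-- The positive square root of a positive real number given as a complex number:
`posSqrtRe w = √(Re w)`, viewed in `ℂ`. -/
noncomputable def posSqrtRe (w : ℂ) : ℂ := ((Real.sqrt w.re : ℝ) : ℂ)

/-- The function `ψ_a(x; z, z', ξ)`, defined by the contour integral representation over the
unit circle (an admissible radius since `√ξ < 1 < 1/√ξ`); all complex powers are principal
branches, and the first factor is the positive square root of the positive real number
`Γ(x+z+1/2)Γ(x+z'+1/2) / (Γ(z-a+1/2)Γ(z'-a+1/2))`. -/
noncomputable def psiF (z z' : ℂ) (ξ : ℝ) (a x : ℝ) : ℂ :=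
  posSqrtRe (Complex.Gamma ((x : ℂ) + z + 1/2) * Complex.Gamma ((x : ℂ) + z' + 1/2) /
      (Complex.Gamma (z - (a : ℂ) + 1/2) * Complex.Gamma (z' - (a : ℂ) + 1/2))) *
    (Complex.Gamma (z' - (a : ℂ) + 1/2) / Complex.Gamma (z' + (x : ℂ) + 1/2)) *
    (1 - (ξ : ℂ)) ^ ((z' - z + 1) / 2) *
    ((2 * (Real.pi : ℂ) * Complex.I)⁻¹ *
      ∮ ω in C(0, 1), (1 - (Real.sqrt ξ : ℂ) * ω) ^ (-z' + (a : ℂ) - 1/2) *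
        (1 - (Real.sqrt ξ : ℂ) / ω) ^ (z - (a : ℂ) - 1/2) * ω ^ (-(x : ℂ) - (a : ℂ) - 1))


noncomputable def cInt (s : ℝ) (α β : ℂ) (m : ℤ) : ℂ :=
  ∮ ω in C(0, 1), (1 - (s:ℂ) * ω) ^ α * (1 - (s:ℂ) / ω) ^ β * ω ^ (-m - 1 : ℤ)

lemma slit_aux_s4 {s : ℝ} (hs0 : 0 ≤ s) (hs1 : s < 1) {w : ℂ} (hw : ‖w‖ = 1) :
    1 - (s:ℂ) * w ∈ Complex.slitPlane := by
  rw [Complex.mem_slitPlane_iff]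
  left
  have h1 : |((s:ℂ) * w).re| ≤ s := by
    calc |((s:ℂ)*w).re| ≤ ‖(s:ℂ)*w‖ := Complex.abs_re_le_norm _
    _ = s := by rw [norm_mul, hw, Complex.norm_real, Real.norm_eq_abs, _root_.abs_of_nonneg hs0, mul_one]
  have h2 : ((s:ℂ)*w).re ≤ s := le_trans (le_abs_self _) h1
  simp only [Complex.sub_re, Complex.one_re]
  linarith

lemma abs_inv_one {ω : ℂ} (hw : ‖ω‖ = 1) : ‖ω⁻¹‖ = 1 := by
  rw [norm_inv, hw, inv_one]

lemma ne_zero_of_abs_one {ω : ℂ} (hw : ‖ω‖ = 1) : ω ≠ 0 := by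
  intro h; rw [h] at hw; simp at hw

lemma hasDerivF {s : ℝ} (hs0 : 0 < s) (hs1 : s < 1) (α β : ℂ) (n : ℤ) {ω : ℂ}
    (hw : ‖ω‖ = 1) :
    HasDerivAt (fun ω : ℂ => (1 - (s:ℂ)*ω)^(α+1) * (1 - (s:ℂ)/ω)^(β+1) * ω ^ (-n : ℤ))
      ( ((s:ℂ)*((n:ℂ)-α-1)) • ((1 - (s:ℂ)*ω)^α * (1 - (s:ℂ)/ω)^β * ω ^ (-(n-1) - 1 : ℤ))
        + ((s:ℂ)^2*(α-β) - (n:ℂ)*(1+(s:ℂ)^2)) • ((1 - (s:ℂ)*ω)^α * (1 - (s:ℂ)/ω)^β * ω ^ (-n - 1 : ℤ))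
        + ((s:ℂ)*(β+1+(n:ℂ))) • ((1 - (s:ℂ)*ω)^α * (1 - (s:ℂ)/ω)^β * ω ^ (-(n+1) - 1 : ℤ)) ) ω := by
  have hω0 : ω ≠ 0 := ne_zero_of_abs_one hw
  have hslit1 : 1 - (s:ℂ)*ω ∈ Complex.slitPlane := slit_aux_s4 hs0.le hs1 hw
  have hslit2 : 1 - (s:ℂ)/ω ∈ Complex.slitPlane := by
    rw [div_eq_mul_inv]; exact slit_aux_s4 hs0.le hs1 (abs_inv_one hw)
  have hA0 : (1 - (s:ℂ)*ω) ≠ 0 := Complex.slitPlane_ne_zero hslit1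
  have hB0 : (1 - (s:ℂ)/ω) ≠ 0 := Complex.slitPlane_ne_zero hslit2
  have h1 : HasDerivAt (fun ω : ℂ => 1 - (s:ℂ)*ω) (-(s:ℂ)) ω := by
    simpa using (HasDerivAt.const_mul (s:ℂ) (hasDerivAt_id ω)).const_sub 1
  have h2 : HasDerivAt (fun ω : ℂ => 1 - (s:ℂ)/ω) ((s:ℂ)*(ω^2)⁻¹) ω := by
    have := (HasDerivAt.const_mul (s:ℂ) (hasDerivAt_inv hω0)).const_sub 1
    simpa [div_eq_mul_inv] using this
  have hPA := h1.cpow_const hslit1 (c := α + 1)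
  have hPB := h2.cpow_const hslit2 (c := β + 1)
  have hC := hasDerivAt_zpow (-n) ω (Or.inl hω0)
  have total := (hPA.mul hPB).mul hC
  convert total using 1
  · rfl
  · rfl
  · rfl
  have hA1 : (1 - (s:ℂ)*ω)^(α+1) = (1 - (s:ℂ)*ω)^α * (1 - (s:ℂ)*ω) := by
    rw [Complex.cpow_add _ _ hA0, Complex.cpow_one]
  have hA2 : (1 - (s:ℂ)*ω)^(α+1-1) = (1 - (s:ℂ)*ω)^α := by rw [add_sub_cancel_right]
  have hB1 : (1 - (s:ℂ)/ω)^(β+1) = (1 - (s:ℂ)/ω)^β * (1 - (s:ℂ)/ω) := by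
    rw [Complex.cpow_add _ _ hB0, Complex.cpow_one]
  have hB2 : (1 - (s:ℂ)/ω)^(β+1-1) = (1 - (s:ℂ)/ω)^β := by rw [add_sub_cancel_right]
  have hz0 : ω ^ (-n : ℤ) = ω ^ (-n-1:ℤ) * ω := by
    rw [← zpow_add_one₀ hω0]; congr 1; ring
  have hz1 : ω ^ (-(n-1) - 1 : ℤ) = ω ^ (-n-1:ℤ) * ω := by
    rw [← zpow_add_one₀ hω0]; congr 1; ring
  have hz3 : ω ^ (-(n+1) - 1 : ℤ) = ω ^ (-n-1:ℤ) * ω⁻¹ := by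
    rw [← zpow_sub_one₀ hω0]; congr 1; ring
  have hzd : ω ^ (-n - 1 : ℤ) = ω ^ (-n-1:ℤ) := rfl
  rw [hA1, hA2, hB1, hB2, hz0, hz1, hz3]
  push_cast
  set P := (1 - (s:ℂ)*ω)^α
  set Q := (1 - (s:ℂ)/ω)^β
  set W := ω ^ (-n-1:ℤ)
  simp only [smul_eq_mul, Pi.mul_apply, hA1, hB1]
  field_simp
  ring

lemma contIntegrand {s : ℝ} (hs0 : 0 < s) (hs1 : s < 1) (α β : ℂ) (m : ℤ) :
    ContinuousOn (fun ω : ℂ => (1 - (s:ℂ)*ω)^α * (1 - (s:ℂ)/ω)^β * ω ^ (m : ℤ))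
      (sphere (0:ℂ) 1) := by
  intro ω hω
  have hw : ‖ω‖ = 1 := by simpa using mem_sphere_zero_iff_norm.mp hω
  have hω0 : ω ≠ 0 := ne_zero_of_abs_one hw
  apply ContinuousAt.continuousWithinAt
  have hg1 : ContinuousAt (fun ω : ℂ => 1 - (s:ℂ)*ω) ω := by fun_prop
  have hg2 : ContinuousAt (fun ω : ℂ => 1 - (s:ℂ)/ω) ω :=
    continuousAt_const.sub (continuousAt_const.div continuousAt_id hω0)
  have c1 : ContinuousAt ((fun x : ℂ => x ^ α) ∘ (fun ω : ℂ => 1 - (s:ℂ)*ω)) ω :=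
    ContinuousAt.comp (continuousAt_cpow_const (slit_aux_s4 hs0.le hs1 hw)) hg1
  have c2 : ContinuousAt ((fun x : ℂ => x ^ β) ∘ (fun ω : ℂ => 1 - (s:ℂ)/ω)) ω := by
    have hslit : 1 - (s:ℂ)/ω ∈ Complex.slitPlane := by
      rw [div_eq_mul_inv]; exact slit_aux_s4 hs0.le hs1 (abs_inv_one hw)
    exact ContinuousAt.comp (continuousAt_cpow_const hslit) hg2
  have c3 : ContinuousAt (fun ω : ℂ => ω ^ (m : ℤ)) ω := continuousAt_zpow₀ ω m (Or.inl hω0)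
  exact (c1.mul c2).mul c3

lemma circleIntegral_add' {f g : ℂ → ℂ} {c : ℂ} {R : ℝ} (hf : CircleIntegrable f c R)
    (hg : CircleIntegrable g c R) :
    (∮ z in C(c, R), (f z + g z)) = (∮ z in C(c, R), f z) + ∮ z in C(c, R), g z := by
  simp only [circleIntegral, smul_add, intervalIntegral.integral_add hf.out hg.out]

lemma cInt_recurrence {s : ℝ} (hs0 : 0 < s) (hs1 : s < 1) (α β : ℂ) (n : ℤ) :
    (s:ℂ)*((n:ℂ)-α-1) * cInt s α β (n-1)
      + ((s:ℂ)^2*(α-β) - (n:ℂ)*(1+(s:ℂ)^2)) * cInt s α β n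
      + (s:ℂ)*(β+1+(n:ℂ)) * cInt s α β (n+1) = 0 := by
  set c₁ : ℂ := (s:ℂ)*((n:ℂ)-α-1) with hc₁
  set c₂ : ℂ := (s:ℂ)^2*(α-β) - (n:ℂ)*(1+(s:ℂ)^2) with hc₂
  set c₃ : ℂ := (s:ℂ)*(β+1+(n:ℂ)) with hc₃
  set g : ℤ → ℂ → ℂ := fun m ω => (1 - (s:ℂ)*ω)^α * (1 - (s:ℂ)/ω)^β * ω ^ (-m - 1 : ℤ)
    with hg
  have hgc : ∀ m : ℤ, ContinuousOn (g m) (sphere (0:ℂ) 1) := fun m =>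
    contIntegrand hs0 hs1 α β (-m-1)
  have hint' : ∀ (c : ℂ) (m : ℤ), CircleIntegrable (fun ω => c • g m ω) 0 1 := fun c m =>
    (((hgc m).const_smul c)).circleIntegrable zero_le_one
  have key : (∮ ω in C(0,1), (c₁ • g (n-1) ω + c₂ • g n ω + c₃ • g (n+1) ω))
      = c₁ * cInt s α β (n-1) + c₂ * cInt s α β n + c₃ * cInt s α β (n+1) := by
    have h12 : CircleIntegrable (fun ω => c₁ • g (n-1) ω + c₂ • g n ω) 0 1 :=
      (hint' c₁ (n-1)).add (hint' c₂ n)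
    rw [circleIntegral_add' h12 (hint' c₃ (n+1)),
        circleIntegral_add' (hint' c₁ (n-1)) (hint' c₂ n),
        circleIntegral.integral_smul, circleIntegral.integral_smul,
        circleIntegral.integral_smul]
    simp only [smul_eq_mul, cInt, hg]
  rw [← key]
  apply circleIntegral.integral_eq_zero_of_hasDerivWithinAt zero_le_one
    (f := fun ω => (1 - (s:ℂ)*ω)^(α+1) * (1 - (s:ℂ)/ω)^(β+1) * ω ^ (-n : ℤ))
  intro ω hω
  have hw : ‖ω‖ = 1 := by simpa using mem_sphere_zero_iff_norm.mp hω
  exact (hasDerivF hs0 hs1 α β n hw).hasDerivWithinAt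

lemma realGamma_mul_pos_aux : ∀ (q : ℕ) (ℓ : ℤ), -(q:ℤ) ≤ ℓ → ∀ u v : ℝ,
    (ℓ:ℝ) < u → u < ℓ+1 → (ℓ:ℝ) < v → v < ℓ+1 → 0 < Real.Gamma u * Real.Gamma v := by
  intro q
  induction q with
  | zero =>
    intro ℓ hl u v h1 h2 h3 h4
    have hu : 0 < u := lt_of_le_of_lt (by exact_mod_cast hl) h1
    have hv : 0 < v := lt_of_le_of_lt (by exact_mod_cast hl) h3
    exact mul_pos (Real.Gamma_pos_of_pos hu) (Real.Gamma_pos_of_pos hv)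
  | succ q ih =>
    intro ℓ hl u v h1 h2 h3 h4
    by_cases h0 : 0 ≤ ℓ
    · have hu : 0 < u := lt_of_le_of_lt (by exact_mod_cast h0) h1
      have hv : 0 < v := lt_of_le_of_lt (by exact_mod_cast h0) h3
      exact mul_pos (Real.Gamma_pos_of_pos hu) (Real.Gamma_pos_of_pos hv)
    · push_neg at h0
      have hl1 : (ℓ:ℝ) + 1 ≤ 0 := by exact_mod_cast Int.add_one_le_of_lt h0
      have hun : u < 0 := lt_of_lt_of_le h2 hl1
      have hvn : v < 0 := lt_of_lt_of_le h4 hl1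
      have hgu : Real.Gamma (u+1) = u * Real.Gamma u := Real.Gamma_add_one hun.ne
      have hgv : Real.Gamma (v+1) = v * Real.Gamma v := Real.Gamma_add_one hvn.ne
      have hrec := ih (ℓ+1) (by omega) (u+1) (v+1)
        (by push_cast; linarith) (by push_cast; linarith)
        (by push_cast; linarith) (by push_cast; linarith)
      have huv : 0 < u * v := mul_pos_of_neg_of_neg hun hvn
      have : Real.Gamma u * Real.Gamma v = (Real.Gamma (u+1) * Real.Gamma (v+1)) / (u*v) := by
        rw [hgu, hgv]
        field_simp [hun.ne, hvn.ne]
      rw [this]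
      exact div_pos hrec huv

lemma realGamma_mul_pos (ℓ : ℤ) (u v : ℝ) (h1 : (ℓ:ℝ) < u) (h2 : u < ℓ+1)
    (h3 : (ℓ:ℝ) < v) (h4 : v < ℓ+1) : 0 < Real.Gamma u * Real.Gamma v :=
  realGamma_mul_pos_aux ℓ.natAbs ℓ (by omega) u v h1 h2 h3 h4

/-- For `(z,z')` in the series, `(z+p)(z'+p)` is a positive real. -/

lemma prodPos {z z' : ℂ} (h : PrincipalSeries z z' ∨ ComplementarySeries z z') (p : ℤ) :
    ∃ r : ℝ, 0 < r ∧ (z + p) * (z' + p) = (r : ℂ) := by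
  rcases h with ⟨him, hconj⟩ | ⟨him, him', m, hm1, hm2, hm3, hm4⟩
  · refine ⟨Complex.normSq (z + p), ?_, ?_⟩
    · exact Complex.normSq_pos.mpr (fun hz => him (by simpa using congrArg Complex.im hz))
    · rw [hconj]
      have : (starRingEnd ℂ) z + (p:ℂ) = (starRingEnd ℂ) (z + p) := by
        simp [map_add]
      rw [this, Complex.mul_conj]
  · have hz : z = (z.re : ℂ) := Complex.ext rfl (by simp [him])
    have hz' : z' = (z'.re : ℂ) := Complex.ext rfl (by simp [him'])
    refine ⟨(z.re + p) * (z'.re + p), ?_, ?_⟩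
    · rcases le_or_gt 0 (m + p : ℤ) with hmp | hmp
      · have h0 : (0:ℝ) ≤ (m:ℝ) + p := by exact_mod_cast hmp
        have : 0 < z.re + p := by linarith
        have : 0 < z'.re + p := by linarith
        positivity
      · have h0 : (m:ℝ) + p + 1 ≤ 0 := by exact_mod_cast Int.add_one_le_of_lt hmp
        have hu : z.re + p < 0 := by linarith
        have hv : z'.re + p < 0 := by linarith
        exact mul_pos_of_neg_of_neg hu hv
    · rw [hz, hz']; simp only [Complex.ofReal_re]; push_cast; ring
  
/-- For `(z,z')` in the series, `Γ(z+p)Γ(z'+p)` is a positive real. -/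

lemma gammaProdPos {z z' : ℂ} (h : PrincipalSeries z z' ∨ ComplementarySeries z z') (p : ℤ) :
    ∃ r : ℝ, 0 < r ∧ Complex.Gamma (z + p) * Complex.Gamma (z' + p) = (r : ℂ) := by
  rcases h with ⟨him, hconj⟩ | ⟨him, him', m, hm1, hm2, hm3, hm4⟩
  · have hne : Complex.Gamma (z + p) ≠ 0 := by
      apply Complex.Gamma_ne_zero
      intro mm hmm
      apply him
      have := congrArg Complex.im hmm
      simpa using this
    refine ⟨Complex.normSq (Complex.Gamma (z + p)), Complex.normSq_pos.mpr hne, ?_⟩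
    have : z' + (p:ℂ) = (starRingEnd ℂ) (z + p) := by rw [hconj]; simp [map_add]
    rw [this, Complex.Gamma_conj, Complex.mul_conj]
  · have hz : z = (z.re : ℂ) := Complex.ext rfl (by simp [him])
    have hz' : z' = (z'.re : ℂ) := Complex.ext rfl (by simp [him'])
    refine ⟨Real.Gamma (z.re + p) * Real.Gamma (z'.re + p), ?_, ?_⟩
    · apply realGamma_mul_pos (m + p) <;> push_cast <;> linarith
    · rw [hz, hz']
      rw [show ((z.re:ℂ) + p) = ((z.re + p : ℝ) : ℂ) by push_cast; ring,
          show ((z'.re:ℂ) + p) = ((z'.re + p : ℝ) : ℂ) by push_cast; ring,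
          Complex.Gamma_ofReal, Complex.Gamma_ofReal]
      simp only [Complex.ofReal_re]; push_cast; ring


/-- For `(z, z')` in the principal or complementary series and `0 < ξ < 1`,
each `ψ_a` (`a = k + 1/2 ∈ ℤ'`) is an eigenfunction of the difference operator `D(z,z',ξ)`
on the lattice `ℤ'` with eigenvalue `a(1-ξ)`: for every point `x = j + 1/2 ∈ ℤ'`,
`√(ξ(z+x+1/2)(z'+x+1/2)) ψ_a(x+1) + √(ξ(z+x-1/2)(z'+x-1/2)) ψ_a(x-1)
  - (x + ξ(z+z'+x)) ψ_a(x) = a(1-ξ) ψ_a(x)`. -/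
theorem psi_eigenfunction (z z' : ℂ) (ξ : ℝ) (hξ0 : 0 < ξ) (hξ1 : ξ < 1)
    (h : PrincipalSeries z z' ∨ ComplementarySeries z z') (k j : ℤ) :
    posSqrtRe ((ξ : ℂ) * (z + ((j : ℂ) + 1/2) + 1/2) * (z' + ((j : ℂ) + 1/2) + 1/2)) *
        psiF z z' ξ ((k : ℝ) + 1/2) (((j : ℝ) + 1/2) + 1)
      + posSqrtRe ((ξ : ℂ) * (z + ((j : ℂ) + 1/2) - 1/2) * (z' + ((j : ℂ) + 1/2) - 1/2)) *
        psiF z z' ξ ((k : ℝ) + 1/2) (((j : ℝ) + 1/2) - 1)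
      - (((j : ℂ) + 1/2) + (ξ : ℂ) * (z + z' + ((j : ℂ) + 1/2))) *
        psiF z z' ξ ((k : ℝ) + 1/2) ((j : ℝ) + 1/2)
      = ((k : ℂ) + 1/2) * (1 - (ξ : ℂ)) * psiF z z' ξ ((k : ℝ) + 1/2) ((j : ℝ) + 1/2) := by
  set s : ℝ := Real.sqrt ξ with hs
  have hs0 : 0 < s := Real.sqrt_pos.mpr hξ0
  have hs1 : s < 1 := by
    rw [hs, show (1:ℝ) = Real.sqrt 1 by simp]
    exact Real.sqrt_lt_sqrt hξ0.le hξ1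
  have hs2 : (s:ℂ)^2 = (ξ:ℂ) := by
    rw [hs]; norm_cast; exact Real.sq_sqrt hξ0.le
  set A : ℂ := (k:ℂ) + 1/2 with hA
  set X : ℂ := (j:ℂ) + 1/2 with hX
  set n : ℤ := j + k + 1 with hn
  -- positivity facts
  obtain ⟨rp, hrp, hrpe⟩ := prodPos h (j+1)
  obtain ⟨rm, hrm, hrme⟩ := prodPos h j
  obtain ⟨g0, hg0, hg0e⟩ := gammaProdPos h (j+1)
  obtain ⟨nu, hnu, hnue⟩ := gammaProdPos h (-k)
  -- canonical forms
  have huv : (z + X + 1/2) * (z' + X + 1/2) = ((rp:ℝ):ℂ) := by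
    rw [hX]; push_cast at hrpe ⊢; linear_combination hrpe
  have hww : (z + X - 1/2) * (z' + X - 1/2) = ((rm:ℝ):ℂ) := by
    rw [hX]; push_cast at hrme ⊢; linear_combination hrme
  have hGuv : Complex.Gamma (z + X + 1/2) * Complex.Gamma (z' + X + 1/2) = ((g0:ℝ):ℂ) := by
    rw [show z + X + 1/2 = z + ((j+1 : ℤ):ℂ) by rw [hX]; push_cast; ring,
        show z' + X + 1/2 = z' + ((j+1 : ℤ):ℂ) by rw [hX]; push_cast; ring]
    exact hg0e
  have hN : Complex.Gamma (z - A + 1/2) * Complex.Gamma (z' - A + 1/2) = ((nu:ℝ):ℂ) := by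
    rw [show z - A + 1/2 = z + ((-k : ℤ):ℂ) by rw [hA]; push_cast; ring,
        show z' - A + 1/2 = z' + ((-k : ℤ):ℂ) by rw [hA]; push_cast; ring]
    exact hnue
  -- nonvanishing
  have hrpc : ((rp:ℝ):ℂ) ≠ 0 := by exact_mod_cast hrp.ne'
  have hrmc : ((rm:ℝ):ℂ) ≠ 0 := by exact_mod_cast hrm.ne'
  have hg0c : ((g0:ℝ):ℂ) ≠ 0 := by exact_mod_cast hg0.ne'
  have hnuc : ((nu:ℝ):ℂ) ≠ 0 := by exact_mod_cast hnu.ne'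
  have huvne : (z + X + 1/2) * (z' + X + 1/2) ≠ 0 := by rw [huv]; exact hrpc
  have hu0 : z + X + 1/2 ≠ 0 := left_ne_zero_of_mul huvne
  have hv0 : z' + X + 1/2 ≠ 0 := right_ne_zero_of_mul huvne
  have hwwne : (z + X - 1/2) * (z' + X - 1/2) ≠ 0 := by rw [hww]; exact hrmc
  have hw0 : z + X - 1/2 ≠ 0 := left_ne_zero_of_mul hwwne
  have hw'0 : z' + X - 1/2 ≠ 0 := right_ne_zero_of_mul hwwne
  have hGuvne : Complex.Gamma (z + X + 1/2) * Complex.Gamma (z' + X + 1/2) ≠ 0 := by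
    rw [hGuv]; exact hg0c
  have hGu0 : Complex.Gamma (z + X + 1/2) ≠ 0 := left_ne_zero_of_mul hGuvne
  have hGv0 : Complex.Gamma (z' + X + 1/2) ≠ 0 := right_ne_zero_of_mul hGuvne
  -- Gamma recurrences
  have hGw : Complex.Gamma (z + X + 1/2) =
      (z + X - 1/2) * Complex.Gamma (z + X - 1/2) := by
    rw [show z + X + 1/2 = (z + X - 1/2) + 1 by ring, Complex.Gamma_add_one _ hw0]
  have hGw' : Complex.Gamma (z' + X + 1/2) =
      (z' + X - 1/2) * Complex.Gamma (z' + X - 1/2) := by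
    rw [show z' + X + 1/2 = (z' + X - 1/2) + 1 by ring, Complex.Gamma_add_one _ hw'0]
  have hGwv0 : Complex.Gamma (z' + X - 1/2) ≠ 0 :=
    right_ne_zero_of_mul (hGw' ▸ hGv0)
  -- cast rewrites for psiF arguments
  have hxc : ((((j:ℝ) + 1/2) : ℝ) : ℂ) = X := by rw [hX]; push_cast; ring
  have hxc1 : (((((j:ℝ) + 1/2) + 1) : ℝ) : ℂ) = X + 1 := by rw [hX]; push_cast; ring
  have hxcm : (((((j:ℝ) + 1/2) - 1) : ℝ) : ℂ) = X - 1 := by rw [hX]; push_cast; ring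
  have hac : ((((k:ℝ) + 1/2) : ℝ) : ℂ) = A := by rw [hA]; push_cast; ring
  simp only [psiF]
  rw [hxc, hxc1, hxcm, hac]
  set α : ℂ := -z' + A - 1/2 with hα
  set β : ℂ := z - A - 1/2 with hβ
  -- convert circle integrals to cInt
  have hI : ∀ (Y : ℂ) (m : ℤ), (-Y - A - 1 = ((-m - 1 : ℤ):ℂ)) →
      (∮ ω in C(0,1), (1 - (s:ℂ)*ω)^α * (1 - (s:ℂ)/ω)^β * ω ^ (-Y - A - 1))
        = cInt s α β m := by
    intro Y m hm
    unfold cInt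
    congr 1
    funext ω
    rw [hm, Complex.cpow_intCast]
  rw [hI (X+1) (n+1) (by rw [hX, hA, hn]; push_cast; ring),
      hI (X-1) (n-1) (by rw [hX, hA, hn]; push_cast; ring),
      hI X n (by rw [hX, hA, hn]; push_cast; ring)]
  -- normalize Gamma arguments
  rw [show X + 1 + z + 1/2 = (z + X + 1/2) + 1 by ring,
      show X + 1 + z' + 1/2 = (z' + X + 1/2) + 1 by ring,
      show z' + (X + 1) + 1/2 = (z' + X + 1/2) + 1 by ring,
      show X - 1 + z + 1/2 = z + X - 1/2 by ring,
      show X - 1 + z' + 1/2 = z' + X - 1/2 by ring,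
      show z' + (X - 1) + 1/2 = z' + X - 1/2 by ring,
      show X + z + 1/2 = z + X + 1/2 by ring,
      show X + z' + 1/2 = z' + X + 1/2 by ring,
      Complex.Gamma_add_one _ hu0, Complex.Gamma_add_one _ hv0]
  -- turn posSqrtRe arguments into real casts
  have hcoef1 : (ξ:ℂ) * (z + X + 1/2) * (z' + X + 1/2) = ((ξ * rp : ℝ):ℂ) := by
    push_cast; linear_combination (ξ:ℂ) * huv
  have hcoefm : (ξ:ℂ) * (z + X - 1/2) * (z' + X - 1/2) = ((ξ * rm : ℝ):ℂ) := by
    push_cast; linear_combination (ξ:ℂ) * hww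
  have hG0 : Complex.Gamma (z + X + 1/2) * Complex.Gamma (z' + X + 1/2) /
      (Complex.Gamma (z - A + 1/2) * Complex.Gamma (z' - A + 1/2)) = ((g0 / nu : ℝ):ℂ) := by
    rw [hN, hGuv]; push_cast; ring
  have hG1 : (z + X + 1/2) * Complex.Gamma (z + X + 1/2) *
      ((z' + X + 1/2) * Complex.Gamma (z' + X + 1/2)) /
      (Complex.Gamma (z - A + 1/2) * Complex.Gamma (z' - A + 1/2))
      = ((rp * (g0 / nu) : ℝ):ℂ) := by
    rw [hN]
    have expand : (z + X + 1/2) * Complex.Gamma (z + X + 1/2) *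
        ((z' + X + 1/2) * Complex.Gamma (z' + X + 1/2)) = ((rp:ℝ):ℂ) * ((g0:ℝ):ℂ) := by
      linear_combination (Complex.Gamma (z + X + 1/2) * Complex.Gamma (z' + X + 1/2)) * huv
        + ((rp:ℝ):ℂ) * hGuv
    rw [expand]; push_cast; ring
  have hGm : Complex.Gamma (z + X - 1/2) * Complex.Gamma (z' + X - 1/2) /
      (Complex.Gamma (z - A + 1/2) * Complex.Gamma (z' - A + 1/2))
      = (((g0 / nu) / rm : ℝ):ℂ) := by
    rw [hN, div_eq_iff hnuc]
    have expandm : Complex.Gamma (z + X - 1/2) * Complex.Gamma (z' + X - 1/2) * ((rm:ℝ):ℂ)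
        = ((g0:ℝ):ℂ) := by
      linear_combination hGuv - Complex.Gamma (z' + X + 1/2) * hGw
        - ((z + X - 1/2) * Complex.Gamma (z + X - 1/2)) * hGw'
        - (Complex.Gamma (z + X - 1/2) * Complex.Gamma (z' + X - 1/2)) * hww
    have hr : (((g0 / nu) / rm : ℝ):ℂ) * ((nu:ℝ):ℂ) * ((rm:ℝ):ℂ) = ((g0:ℝ):ℂ) := by
      push_cast; field_simp
    exact mul_right_cancel₀ hrmc (by rw [expandm]; linear_combination -hr)
  rw [hcoef1, hcoefm, hG0, hG1, hGm]
  simp only [posSqrtRe, Complex.ofReal_re]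
  -- real square-root identities, lifted to ℂ
  have hgnu : (0:ℝ) ≤ g0 / nu := (div_pos hg0 hnu).le
  have r1 : Real.sqrt (ξ * rp) * Real.sqrt (rp * (g0 / nu))
      = s * rp * Real.sqrt (g0 / nu) := by
    rw [Real.sqrt_mul hξ0.le, Real.sqrt_mul hrp.le, hs]
    have hm : Real.sqrt rp * Real.sqrt rp = rp := Real.mul_self_sqrt hrp.le
    linear_combination (Real.sqrt ξ * Real.sqrt (g0 / nu)) * hm
  have r2 : Real.sqrt (ξ * rm) * Real.sqrt ((g0 / nu) / rm) = s * Real.sqrt (g0 / nu) := by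
    rw [Real.sqrt_mul hξ0.le, Real.sqrt_div hgnu, hs]
    have hrmne : Real.sqrt rm ≠ 0 := (Real.sqrt_pos.mpr hrm).ne'
    field_simp
  have hs1c : ((Real.sqrt (ξ * rp) : ℝ):ℂ) * ((Real.sqrt (rp * (g0 / nu)) : ℝ):ℂ)
      = (s:ℂ) * ((z + X + 1/2) * (z' + X + 1/2)) * ((Real.sqrt (g0 / nu) : ℝ):ℂ) := by
    rw [huv]; exact_mod_cast r1
  have hs2c : ((Real.sqrt (ξ * rm) : ℝ):ℂ) * ((Real.sqrt ((g0 / nu) / rm) : ℝ):ℂ)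
      = (s:ℂ) * ((Real.sqrt (g0 / nu) : ℝ):ℂ) := by
    exact_mod_cast r2
  -- the contour-integral recurrence with cleaned coefficients
  have hrc := cInt_recurrence hs0 hs1 α β n
  have e1 : (s:ℂ) * (((n:ℤ):ℂ) - α - 1) = (s:ℂ) * (z' + X - 1/2) := by
    rw [hα, hA, hX, hn]; push_cast; ring
  have e2 : (s:ℂ)^2 * (α - β) - ((n:ℤ):ℂ) * (1 + (s:ℂ)^2)
      = (ξ:ℂ) * (2*A - z - z') - (X + A) * (1 + (ξ:ℂ)) := by
    rw [hs2, hα, hβ, hA, hX, hn]; push_cast; ring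
  have e3 : (s:ℂ) * (β + 1 + ((n:ℤ):ℂ)) = (s:ℂ) * (z + X + 1/2) := by
    rw [hβ, hA, hX, hn]; push_cast; ring
  rw [e1, e2, e3] at hrc
  -- denominator cleanups
  have hq2 : Complex.Gamma (z' - A + 1/2) / Complex.Gamma (z' + X - 1/2)
      = (z' + X - 1/2) * (Complex.Gamma (z' - A + 1/2) / Complex.Gamma (z' + X + 1/2)) := by
    rw [hGw', eq_comm, ← mul_div_assoc, mul_div_mul_left _ _ hw'0]
  have hq1 : Complex.Gamma (z' - A + 1/2) / ((z' + X + 1/2) * Complex.Gamma (z' + X + 1/2))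
      = (Complex.Gamma (z' - A + 1/2) / Complex.Gamma (z' + X + 1/2)) / (z' + X + 1/2) := by
    rw [div_div]; ring_nf
  rw [hq1, hq2]
  -- final algebra
  set R : ℂ := Complex.Gamma (z' - A + 1/2) / Complex.Gamma (z' + X + 1/2) with hR
  set C1 : ℂ := (1 - (ξ:ℂ)) ^ ((z' - z + 1) / 2) with hC1
  set C2 : ℂ := (2 * (Real.pi:ℂ) * Complex.I)⁻¹ with hC2
  set S0 : ℂ := ((Real.sqrt (g0 / nu) : ℝ):ℂ) with hS0
  have hvv : (z' + X + 1/2) * (R / (z' + X + 1/2)) = R := mul_div_cancel₀ R hv0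
  linear_combination
    ((R / (z' + X + 1/2)) * C1 * (C2 * cInt s α β (n+1))) * hs1c
    + ((s:ℂ) * (z + X + 1/2) * S0 * C1 * C2 * cInt s α β (n+1)) * hvv
    + ((z' + X - 1/2) * R * C1 * (C2 * cInt s α β (n-1))) * hs2c
    + (S0 * R * C1 * C2) * hrc
end

section
/- Let 0 < ξ < 1 and let (z, z′) be in the principal or complementary series (then so is (−z, −z′)). For all a, x ∈ ℤ′: ψ_a(x; z, z′, ξ) = ψ_x(a; −z, −z′, ξ). -/
/-! ### Auxiliary lemmas -/

open Complex Real

noncomputable section PsiAux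

namespace PsiAux

/-- the real function giving the angular part of the Möbius map on the circle -/
def tt (s θ : ℝ) : ℝ := s * Real.sin θ / (1 - s * Real.cos θ)
def phi (s θ : ℝ) : ℝ := θ + π + 2 * Real.arctan (tt s θ)
def ttd (s θ : ℝ) : ℝ :=
  (s * Real.cos θ * (1 - s * Real.cos θ) - s * Real.sin θ * (s * Real.sin θ)) /
    (1 - s * Real.cos θ) ^ 2
def phid (s θ : ℝ) : ℝ := 1 + 2 * (1 / (1 + tt s θ ^ 2) * ttd s θ)

lemma hD_pos {s : ℝ} (hs0 : 0 < s) (hs1 : s < 1) (θ : ℝ) : 0 < 1 - s * Real.cos θ := by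
  nlinarith [Real.cos_le_one θ, Real.neg_one_le_cos θ]

lemma tt_hasDeriv {s : ℝ} (hs0 : 0 < s) (hs1 : s < 1) (θ : ℝ) : HasDerivAt (tt s) (ttd s θ) θ := by
  have h1 : HasDerivAt (fun θ : ℝ => s * Real.sin θ) (s * Real.cos θ) θ :=
    (Real.hasDerivAt_sin θ).const_mul s
  have h2 : HasDerivAt (fun θ : ℝ => 1 - s * Real.cos θ) (s * Real.sin θ) θ := by
    simpa using ((Real.hasDerivAt_cos θ).const_mul s).const_sub 1
  have := h1.div h2 (hD_pos hs0 hs1 θ).ne'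
  exact this

lemma phi_hasDeriv {s : ℝ} (hs0 : 0 < s) (hs1 : s < 1) (θ : ℝ) :
    HasDerivAt (phi s) (phid s θ) θ := by
  have h1 := (tt_hasDeriv hs0 hs1 θ).arctan
  have h2 : HasDerivAt (fun θ : ℝ => θ + π) 1 θ := (hasDerivAt_id θ).add_const π
  have := h2.add (h1.const_mul 2)
  exact this

lemma tt_cont {s : ℝ} (hs0 : 0 < s) (hs1 : s < 1) : Continuous (tt s) := by
  apply Continuous.div (by fun_prop) (by fun_prop)
  exact fun θ => (hD_pos hs0 hs1 θ).ne'

lemma ttd_cont {s : ℝ} (hs0 : 0 < s) (hs1 : s < 1) : Continuous (ttd s) := by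
  apply Continuous.div (by fun_prop) (by fun_prop)
  exact fun θ => pow_ne_zero 2 (hD_pos hs0 hs1 θ).ne'

lemma phid_cont {s : ℝ} (hs0 : 0 < s) (hs1 : s < 1) : Continuous (phid s) := by
  unfold phid
  have h1 : Continuous fun θ : ℝ => 1 / (1 + tt s θ ^ 2) := by
    apply Continuous.div continuous_const (continuous_const.add ((tt_cont hs0 hs1).pow 2))
    intro θ; show (1 + tt s θ ^ 2) ≠ 0; positivity
  exact continuous_const.add (Continuous.mul continuous_const (h1.mul (ttd_cont hs0 hs1)))

lemma exp_two_arctan (τ : ℝ) :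
    Complex.exp (((2 * Real.arctan τ : ℝ) : ℂ) * Complex.I)
      = (((1 - τ^2)/(1 + τ^2) : ℝ) : ℂ) + (((2*τ/(1+τ^2)) : ℝ) : ℂ) * Complex.I := by
  rw [Complex.exp_mul_I, ← Complex.ofReal_cos, ← Complex.ofReal_sin]
  have h0 : (0:ℝ) < 1 + τ^2 := by positivity
  have hc : Real.cos (2 * Real.arctan τ) = (1 - τ^2)/(1+τ^2) := by
    rw [Real.cos_two_mul, Real.cos_arctan]
    rw [div_pow, one_pow, Real.sq_sqrt h0.le]
    field_simp
    ring
  have hs : Real.sin (2 * Real.arctan τ) = 2*τ/(1+τ^2) := by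
    rw [Real.sin_two_mul, Real.sin_arctan, Real.cos_arctan]
    have hsq : Real.sqrt (1+τ^2) * Real.sqrt (1+τ^2) = 1 + τ^2 := Real.mul_self_sqrt h0.le
    have hsn : Real.sqrt (1+τ^2) ≠ 0 := by positivity
    field_simp
    rw [Real.sq_sqrt h0.le]
  rw [hc, hs]

lemma key1 {s : ℝ} (hs0 : 0 < s) (hs1 : s < 1) (θ : ℝ) :
    Complex.exp (((phi s θ : ℝ) : ℂ) * Complex.I)
      = ((s:ℂ) - Complex.exp ((θ:ℂ) * Complex.I)) /
          (1 - (s:ℂ) * Complex.exp ((θ:ℂ) * Complex.I)) := by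
  set τ := tt s θ with hτ
  set c := Real.cos θ with hc
  set n := Real.sin θ with hn
  have hD := hD_pos hs0 hs1 θ
  have hDne : ((1:ℂ) - s*c) ≠ 0 := by
    have : ((1 - s*c : ℝ) : ℂ) ≠ 0 := by exact_mod_cast hD.ne'
    push_cast at this; exact this
  have hτD : (τ:ℂ) * ((1:ℂ) - s*c) = (s:ℂ) * n := by
    rw [hτ]; unfold tt
    rw [← hc, ← hn]
    have h2 : ((s * n / (1 - s * c) : ℝ) : ℂ) = (s:ℂ)*n / (1 - (s:ℂ)*c) := by push_cast; ring
    rw [h2, div_mul_cancel₀ _ hDne]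
  have hcnR : c^2 + n^2 = 1 := by rw [hc, hn]; exact Real.cos_sq_add_sin_sq θ
  have hcn : (c:ℂ)^2 + (n:ℂ)^2 = 1 := by exact_mod_cast hcnR
  have hu : Complex.exp ((θ:ℂ) * Complex.I) = (c:ℂ) + (n:ℂ) * Complex.I := by
    rw [Complex.exp_mul_I, ← Complex.ofReal_cos, ← Complex.ofReal_sin, ← hc, ← hn]
  have hsplit : Complex.exp (((phi s θ : ℝ) : ℂ) * Complex.I)
      = Complex.exp ((θ:ℂ) * Complex.I) * Complex.exp ((π:ℂ) * Complex.I)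
        * Complex.exp (((2 * Real.arctan τ : ℝ) : ℂ) * Complex.I) := by
    rw [← Complex.exp_add, ← Complex.exp_add]
    congr 1
    unfold phi
    rw [← hτ]
    push_cast
    ring
  rw [hsplit, Complex.exp_pi_mul_I, exp_two_arctan, hu]
  have h1p : ((1:ℂ) + (τ:ℂ)^2) ≠ 0 := by
    have : ((1 + τ^2 : ℝ) : ℂ) ≠ 0 := by
      exact_mod_cast (by positivity : (1 + τ^2 : ℝ) ≠ 0)
    push_cast at this; exact this
  have hden : (1:ℂ) - (s:ℂ) * ((c:ℂ) + (n:ℂ)*Complex.I) ≠ 0 := by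
    intro hzero
    have him : ((1:ℂ) - (s:ℂ)*((c:ℂ)+(n:ℂ)*Complex.I)).im = 0 := by rw [hzero]; simp
    have hre : ((1:ℂ) - (s:ℂ)*((c:ℂ)+(n:ℂ)*Complex.I)).re = 0 := by rw [hzero]; simp
    simp [Complex.sub_re, Complex.mul_re, Complex.mul_im] at him hre
    nlinarith [hD, hre, him]
  have e1 : (((1 - τ^2)/(1+τ^2) : ℝ) : ℂ) + (((2*τ/(1+τ^2)) : ℝ) : ℂ) * Complex.I
      = ((1:ℂ) + (τ:ℂ)*Complex.I)^2 / (1 + (τ:ℂ)^2) := by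
    push_cast
    rw [div_mul_eq_mul_div, ← add_div, div_eq_div_iff h1p h1p]
    linear_combination (-(τ:ℂ)^2*(1+(τ:ℂ)^2)) * Complex.I_sq
  rw [e1, mul_div_assoc', div_eq_div_iff h1p hden]
  have e2 : ((1:ℂ) + (τ:ℂ)*Complex.I) * ((1:ℂ) - (τ:ℂ)*Complex.I) = 1 + (τ:ℂ)^2 := by
    linear_combination (-(τ:ℂ)^2) * Complex.I_sq
  have e3 : ((1:ℂ) - (τ:ℂ)*Complex.I) * ((1:ℂ) - (s:ℂ)*(c:ℂ))
      = 1 - (s:ℂ)*((c:ℂ)+(n:ℂ)*Complex.I) := by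
    linear_combination (-Complex.I) * hτD
  have e4 : -(((c:ℂ)+(n:ℂ)*Complex.I)) * (((1:ℂ)+(τ:ℂ)*Complex.I) * ((1:ℂ) - (s:ℂ)*(c:ℂ)))
      = (s:ℂ) - ((c:ℂ)+(n:ℂ)*Complex.I) := by
    linear_combination (-(((c:ℂ)+(n:ℂ)*Complex.I))*Complex.I) * hτD + (s:ℂ) * hcn
      + (-(s:ℂ)*(n:ℂ)^2) * Complex.I_sq
  linear_combination (((c:ℂ)+(n:ℂ)*Complex.I)*((1:ℂ)+(τ:ℂ)*Complex.I)^2) * e3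
    + (-(((c:ℂ)+(n:ℂ)*Complex.I))*((1:ℂ)+(τ:ℂ)*Complex.I)*((1:ℂ)-(s:ℂ)*(c:ℂ))) * e2
    + ((1:ℂ)+(τ:ℂ)^2) * e4

lemma one_sub_mul_ne_zero {s : ℝ} (hs0 : 0 < s) (hs1 : s < 1) {u : ℂ}
    (hu : ‖u‖ = 1) : 1 - (s:ℂ) * u ≠ 0 := by
  intro hz
  have : ‖(s:ℂ) * u‖ = 1 := by
    have : (s:ℂ) * u = 1 := by linear_combination -hz
    rw [this]; simp
  rw [norm_mul, hu, mul_one, Complex.norm_of_nonneg hs0.le] at this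
  linarith

/-- Möbius substitution in a circle integral. -/
lemma circle_subst {s : ℝ} (hs0 : 0 < s) (hs1 : s < 1) (f : ℂ → ℂ)
    (hf : Continuous fun θ : ℝ => f (Complex.exp ((θ:ℂ) * Complex.I))) :
    (∮ ω in C(0, 1), f ω)
      = ∮ u in C(0, 1), f (((s:ℂ) - u) / (1 - (s:ℂ) * u)) *
          (((s:ℂ)^2 - 1) / (1 - (s:ℂ) * u)^2) := by
  have hcm : ∀ θ : ℝ, circleMap 0 1 θ = Complex.exp ((θ:ℂ) * Complex.I) := by
    intro θ; simp [circleMap]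
  have habs : ∀ θ : ℝ, ‖Complex.exp ((θ:ℂ) * Complex.I)‖ = 1 := fun θ =>
    Complex.norm_exp_ofReal_mul_I θ
  have hcirc : ∀ g : ℂ → ℂ, (∮ w in C(0, 1), g w)
      = ∫ θ in (0:ℝ)..2*π, (Complex.exp ((θ:ℂ) * Complex.I) * Complex.I) *
          g (Complex.exp ((θ:ℂ) * Complex.I)) := by
    intro g
    simp only [circleIntegral, deriv_circleMap, hcm, smul_eq_mul]
  set F : ℝ → ℂ := fun ψ => Complex.exp ((ψ:ℂ) * Complex.I) * Complex.I *
    f (Complex.exp ((ψ:ℂ) * Complex.I)) with hF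
  have hFcont : Continuous F := by
    apply Continuous.mul _ hf
    exact (Complex.continuous_exp.comp
      (Complex.continuous_ofReal.mul continuous_const)).mul continuous_const
  have hFper : Function.Periodic F (2*π) := by
    intro ψ
    have : Complex.exp (((ψ + 2*π : ℝ):ℂ) * Complex.I) = Complex.exp ((ψ:ℂ) * Complex.I) := by
      push_cast
      rw [add_mul, Complex.exp_add, Complex.exp_two_pi_mul_I, mul_one]
    simp only [hF, this]
  have eq1 : ∀ θ : ℝ, Complex.exp (((phi s θ : ℝ):ℂ) * Complex.I) * ((phid s θ : ℂ) * Complex.I)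
      = (((s:ℂ)^2 - 1) / (1 - (s:ℂ) * Complex.exp ((θ:ℂ)*Complex.I))^2) *
          (Complex.exp ((θ:ℂ)*Complex.I) * Complex.I) := by
    intro θ
    have hd1 : HasDerivAt (fun θ : ℝ => Complex.exp (((phi s θ : ℝ):ℂ) * Complex.I))
        (Complex.exp (((phi s θ : ℝ):ℂ) * Complex.I) * ((phid s θ : ℂ) * Complex.I)) θ :=
      (((phi_hasDeriv hs0 hs1 θ).ofReal_comp).mul_const Complex.I).cexp
    have he : HasDerivAt (fun θ : ℝ => Complex.exp ((θ:ℂ) * Complex.I))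
        (Complex.exp ((θ:ℂ) * Complex.I) * Complex.I) θ := by
      simpa using ((hasDerivAt_id θ).ofReal_comp.mul_const Complex.I).cexp
    have hT : HasDerivAt (fun w : ℂ => ((s:ℂ) - w) / (1 - (s:ℂ) * w))
        (((s:ℂ)^2 - 1) / (1 - (s:ℂ) * Complex.exp ((θ:ℂ)*Complex.I))^2)
        (Complex.exp ((θ:ℂ)*Complex.I)) := by
      have hne := one_sub_mul_ne_zero hs0 hs1 (habs θ)
      have h1 : HasDerivAt (fun w : ℂ => (s:ℂ) - w) (-1) (Complex.exp ((θ:ℂ)*Complex.I)) := by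
        simpa using (hasDerivAt_id (Complex.exp ((θ:ℂ)*Complex.I))).const_sub (s:ℂ)
      have h2 : HasDerivAt (fun w : ℂ => 1 - (s:ℂ) * w) (-(s:ℂ))
          (Complex.exp ((θ:ℂ)*Complex.I)) := by
        simpa using ((hasDerivAt_id (Complex.exp ((θ:ℂ)*Complex.I))).const_mul (s:ℂ)).const_sub 1
      have := h1.div h2 hne
      rw [show ((s:ℂ)^2 - 1) / (1 - (s:ℂ) * Complex.exp ((θ:ℂ)*Complex.I))^2
          = (-1 * (1 - (s:ℂ) * Complex.exp ((θ:ℂ)*Complex.I))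
            - ((s:ℂ) - Complex.exp ((θ:ℂ)*Complex.I)) * -(s:ℂ))
            / (1 - (s:ℂ) * Complex.exp ((θ:ℂ)*Complex.I))^2 by ring]
      exact this
    have hd2 : HasDerivAt
        (fun θ : ℝ => ((s:ℂ) - Complex.exp ((θ:ℂ)*Complex.I)) /
          (1 - (s:ℂ) * Complex.exp ((θ:ℂ)*Complex.I)))
        (((s:ℂ)^2 - 1) / (1 - (s:ℂ) * Complex.exp ((θ:ℂ)*Complex.I))^2 *
          (Complex.exp ((θ:ℂ)*Complex.I) * Complex.I)) θ :=
      HasDerivAt.comp (h₂ := fun w : ℂ => ((s:ℂ) - w) / (1 - (s:ℂ) * w)) θ hT he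
    have hfun : (fun θ : ℝ => Complex.exp (((phi s θ : ℝ):ℂ) * Complex.I))
        = fun θ : ℝ => ((s:ℂ) - Complex.exp ((θ:ℂ)*Complex.I)) /
            (1 - (s:ℂ) * Complex.exp ((θ:ℂ)*Complex.I)) := by
      funext θ; exact key1 hs0 hs1 θ
    exact (hfun ▸ hd1).unique hd2
  rw [hcirc f, hcirc]
  have hsub : (∫ θ in (0:ℝ)..2*π, (Complex.exp ((θ:ℂ) * Complex.I) * Complex.I) *
        (f (((s:ℂ) - Complex.exp ((θ:ℂ) * Complex.I)) /
            (1 - (s:ℂ) * Complex.exp ((θ:ℂ) * Complex.I))) *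
          (((s:ℂ)^2 - 1) / (1 - (s:ℂ) * Complex.exp ((θ:ℂ) * Complex.I))^2)))
      = ∫ θ in (0:ℝ)..2*π, (phid s θ) • (F ∘ (phi s)) θ := by
    apply intervalIntegral.integral_congr
    intro θ _
    simp only [Function.comp, hF, Complex.real_smul]
    have k := key1 hs0 hs1 θ
    have e1 := eq1 θ
    rw [k] at e1 ⊢
    linear_combination (-(f (((s:ℂ) - Complex.exp ((θ:ℂ)*Complex.I)) /
      (1 - (s:ℂ)*Complex.exp ((θ:ℂ)*Complex.I))))) * e1
  rw [hsub, intervalIntegral.integral_comp_smul_deriv (fun θ _ => phi_hasDeriv hs0 hs1 θ)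
    ((phid_cont hs0 hs1).continuousOn) hFcont]
  have hphi0 : phi s 0 = π := by
    simp [phi, tt]
  have hphi2 : phi s (2*π) = π + 2*π := by
    simp [phi, tt]
    ring
  rw [hphi0, hphi2]
  have := hFper.intervalIntegral_add_eq π 0
  simpa using this.symm

lemma ofReal_mul_cpow' {r : ℝ} (hr : 0 < r) {w : ℂ} (hw : w ≠ 0) (c : ℂ) :
    ((r : ℂ) * w) ^ c = (r : ℂ) ^ c * w ^ c := by
  have hr' : (r : ℂ) ≠ 0 := ofReal_ne_zero.mpr hr.ne'
  rw [Complex.cpow_def_of_ne_zero (mul_ne_zero hr' hw), Complex.cpow_def_of_ne_zero hr',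
    Complex.cpow_def_of_ne_zero hw, Complex.log_ofReal_mul hr hw, ← Complex.exp_add,
    ← Complex.ofReal_log hr.le]
  ring_nf

lemma inv_cpow_of_pos_re {w : ℂ} (hw : 0 < w.re) (c : ℂ) : (w⁻¹) ^ c = w ^ (-c) := by
  rw [Complex.inv_cpow _ _ (fun hπ => by
    have := Complex.arg_eq_pi_iff.mp hπ; linarith [this.1]), Complex.cpow_neg]

lemma neg_one_zpow_inv (n : ℤ) : ((-1 : ℤ) ^ n : ℂ)⁻¹ = ((-1 : ℤ) ^ n : ℂ) := by
  push_cast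
  refine inv_eq_of_mul_eq_one_right ?_
  rw [← zpow_add₀ (by norm_num : (-1:ℂ) ≠ 0)]
  exact Even.neg_one_zpow ⟨n, rfl⟩

lemma neg_one_zpow_inv' (n : ℤ) : ((-1 : ℂ) ^ n)⁻¹ = (-1 : ℂ) ^ n := by
  refine inv_eq_of_mul_eq_one_right ?_
  rw [← zpow_add₀ (by norm_num : (-1:ℂ) ≠ 0)]
  exact Even.neg_one_zpow ⟨n, rfl⟩

lemma re_pos_of_abs_one {s : ℝ} (hs0 : 0 < s) (hs1 : s < 1) {w : ℂ}
    (hw : ‖w‖ = 1) : 0 < (1 - (s:ℂ) * w).re := by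
  have h1 : w.re ≤ 1 := by
    calc w.re ≤ |w.re| := le_abs_self _
    _ ≤ ‖w‖ := Complex.abs_re_le_norm w
    _ = 1 := hw
  have h2 : -1 ≤ w.re := by
    have := Complex.abs_re_le_norm w
    rw [hw] at this
    cases abs_le.mp this; linarith
  simp only [Complex.sub_re, Complex.one_re, Complex.mul_re, Complex.ofReal_re,
    Complex.ofReal_im, zero_mul, sub_zero]
  nlinarith

lemma one_sub_mul_ne_zero' {s : ℝ} (hs0 : 0 < s) (hs1 : s < 1) {w : ℂ}
    (hw : ‖w‖ = 1) : 1 - (s:ℂ) * w ≠ 0 := by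
  intro hz
  have h : (1 - (s:ℂ)*w).re = 0 := by rw [hz]; simp
  have := re_pos_of_abs_one hs0 hs1 hw
  linarith

lemma transform_pointwise {s : ℝ} (hs0 : 0 < s) (hs1 : s < 1) (A B A₂ B₂ : ℂ) (n : ℤ)
    (hA₂ : A₂ = -A + n - 2) (hB₂ : B₂ = -B - n)
    {u : ℂ} (hu : ‖u‖ = 1) :
    (1 - (s:ℂ) * (((s:ℂ) - u)/(1 - (s:ℂ)*u))) ^ A
      * (1 - (s:ℂ) / (((s:ℂ) - u)/(1 - (s:ℂ)*u))) ^ B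
      * (((s:ℂ) - u)/(1 - (s:ℂ)*u)) ^ (-n : ℤ)
      * (((s:ℂ)^2 - 1)/(1 - (s:ℂ)*u)^2)
    = (((1 - s^2 : ℝ)):ℂ) ^ (A + B + 1) * (-1:ℂ)^(n+1)
      * ((1 - (s:ℂ)*u) ^ A₂ * (1 - (s:ℂ)/u) ^ B₂ * u ^ (-n : ℤ)) := by
  have hu0 : u ≠ 0 := by
    intro h; rw [h] at hu; simp at hu
  have huinv : ‖u⁻¹‖ = 1 := by rw [norm_inv, hu]; norm_num
  have h1ne : 1 - (s:ℂ)*u ≠ 0 := one_sub_mul_ne_zero' hs0 hs1 hu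
  have h1re : 0 < (1 - (s:ℂ)*u).re := re_pos_of_abs_one hs0 hs1 hu
  have h2ne : 1 - (s:ℂ)/u ≠ 0 := by
    rw [div_eq_mul_inv]; exact one_sub_mul_ne_zero' hs0 hs1 huinv
  have h2re : 0 < (1 - (s:ℂ)/u).re := by
    rw [div_eq_mul_inv]; exact re_pos_of_abs_one hs0 hs1 huinv
  have hsu : (s:ℂ) - u ≠ 0 := by
    intro h
    have : u = (s:ℂ) := by linear_combination -h
    rw [this, Complex.norm_of_nonneg hs0.le] at hu
    linarith
  have hus : u - (s:ℂ) ≠ 0 := fun h => hsu (by linear_combination -h)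
  have hr2 : (0:ℝ) < 1 - s^2 := by nlinarith
  have hr2c : ((1 - s^2 : ℝ):ℂ) ≠ 0 := ofReal_ne_zero.mpr hr2.ne'
  have c1 : 1 - (s:ℂ) * (((s:ℂ) - u)/(1 - (s:ℂ)*u)) = ((1 - s^2 : ℝ):ℂ) * (1 - (s:ℂ)*u)⁻¹ := by
    push_cast
    field_simp
    ring
  have c2 : 1 - (s:ℂ) / (((s:ℂ) - u)/(1 - (s:ℂ)*u)) = ((1 - s^2 : ℝ):ℂ) * (1 - (s:ℂ)/u)⁻¹ := by
    push_cast
    rw [div_div_eq_mul_div, div_eq_mul_inv ((s:ℂ)*(1-(s:ℂ)*u)) _]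
    field_simp
    ring
  have p1 : (1 - (s:ℂ) * (((s:ℂ) - u)/(1 - (s:ℂ)*u))) ^ A
      = ((1 - s^2 : ℝ):ℂ) ^ A * (1 - (s:ℂ)*u) ^ (-A) := by
    rw [c1, ofReal_mul_cpow' hr2 (inv_ne_zero h1ne), inv_cpow_of_pos_re h1re]
  have p2 : (1 - (s:ℂ) / (((s:ℂ) - u)/(1 - (s:ℂ)*u))) ^ B
      = ((1 - s^2 : ℝ):ℂ) ^ B * (1 - (s:ℂ)/u) ^ (-B) := by
    rw [c2, ofReal_mul_cpow' hr2 (inv_ne_zero h2ne), inv_cpow_of_pos_re h2re]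
  have hfac : ((s:ℂ) - u)/(1 - (s:ℂ)*u) = (-1) * u * (1 - (s:ℂ)/u) * (1 - (s:ℂ)*u)⁻¹ := by
    field_simp
    ring
  have p3 : (((s:ℂ) - u)/(1 - (s:ℂ)*u)) ^ (-n : ℤ)
      = (-1:ℂ)^n * u^(-n : ℤ) * (1 - (s:ℂ)/u)^(-n : ℤ) * (1 - (s:ℂ)*u)^(n : ℤ) := by
    rw [hfac, mul_zpow, mul_zpow, mul_zpow, inv_zpow, zpow_neg (1 - (s:ℂ)*u), inv_inv,
      zpow_neg (-1 : ℂ), neg_one_zpow_inv']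
  rw [p1, p2, p3]
  have m1 : (1 - (s:ℂ)*u) ^ (-A) * (1 - (s:ℂ)*u)^(n:ℤ) * ((1 - (s:ℂ)*u)^2)⁻¹
      = (1 - (s:ℂ)*u) ^ A₂ := by
    rw [hA₂, ← Complex.cpow_intCast (1 - (s:ℂ)*u) n,
      show ((1 - (s:ℂ)*u)^2 : ℂ) = (1 - (s:ℂ)*u) ^ ((2:ℕ):ℂ) from
        (Complex.cpow_natCast _ 2).symm ▸ rfl,
      ← Complex.cpow_neg, ← Complex.cpow_add _ _ h1ne, ← Complex.cpow_add _ _ h1ne]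
    congr 1
    all_goals (push_cast; ring)
  have m2 : (1 - (s:ℂ)/u) ^ (-B) * (1 - (s:ℂ)/u)^(-n:ℤ) = (1 - (s:ℂ)/u) ^ B₂ := by
    rw [hB₂, ← Complex.cpow_intCast (1 - (s:ℂ)/u) (-n), ← Complex.cpow_add _ _ h2ne]
    push_cast
    ring_nf
  have m3 : ((1 - s^2 : ℝ):ℂ) ^ A * ((1 - s^2 : ℝ):ℂ) ^ B * (((s:ℂ)^2 - 1))
      = ((1 - s^2 : ℝ):ℂ) ^ (A + B + 1) * (-1 : ℂ) := by
    rw [Complex.cpow_add _ _ hr2c, Complex.cpow_add _ _ hr2c, Complex.cpow_one]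
    push_cast
    ring
  have m4 : (-1:ℂ)^n * (-1:ℂ) = (-1:ℂ)^(n+1) := by
    rw [zpow_add₀ (by norm_num : (-1:ℂ) ≠ 0), zpow_one]
  calc ((1 - s^2 : ℝ):ℂ) ^ A * (1 - (s:ℂ)*u) ^ (-A)
        * (((1 - s^2 : ℝ):ℂ) ^ B * (1 - (s:ℂ)/u) ^ (-B))
        * ((-1:ℂ)^n * u^(-n : ℤ) * (1 - (s:ℂ)/u)^(-n : ℤ) * (1 - (s:ℂ)*u)^(n : ℤ))
        * (((s:ℂ)^2 - 1)/(1 - (s:ℂ)*u)^2)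
      = (((1 - s^2 : ℝ):ℂ) ^ A * ((1 - s^2 : ℝ):ℂ) ^ B * ((s:ℂ)^2 - 1))
        * ((-1:ℂ)^n)
        * ((1 - (s:ℂ)*u) ^ (-A) * (1 - (s:ℂ)*u)^(n:ℤ) * ((1 - (s:ℂ)*u)^2)⁻¹)
        * ((1 - (s:ℂ)/u) ^ (-B) * (1 - (s:ℂ)/u)^(-n:ℤ))
        * u^(-n:ℤ) := by
        field_simp
    _ = ((1 - s^2 : ℝ):ℂ) ^ (A + B + 1) * (-1:ℂ)^(n+1)
        * ((1 - (s:ℂ)*u) ^ A₂ * (1 - (s:ℂ)/u) ^ B₂ * u ^ (-n : ℤ)) := by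
        rw [m1, m2, m3]
        rw [← m4]
        ring

lemma sin_shift (w : ℂ) (m : ℤ) :
    Complex.sin ((π:ℂ) * (w + m)) = (-1) ^ m * Complex.sin ((π:ℂ) * w) := by
  have h := m.cast_negOnePow ℂ ▸ Complex.sin_antiperiodic.add_int_mul_eq (x := (π:ℂ) * w) m
  rw [show (π:ℂ) * (w + m) = (π:ℂ)*w + m * π by ring, h]

lemma neg_one_zpow_even_diff {a b : ℤ} (h : Even (a - b)) : (-1:ℂ)^a = (-1:ℂ)^b := by
  have : (-1:ℂ)^a = (-1:ℂ)^(b + (a - b)) := by norm_num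
  rw [this, zpow_add₀ (by norm_num : (-1:ℂ) ≠ 0), Even.neg_one_zpow h, mul_one]

lemma sin_pi_ne {z : ℂ} (hz : ∀ m : ℤ, z ≠ (m:ℂ)) : Complex.sin ((π:ℂ) * z) ≠ 0 := by
  rw [Complex.sin_ne_zero_iff]
  have hπ : (π:ℂ) ≠ 0 := by exact_mod_cast Real.pi_ne_zero
  intro m hm
  exact hz m (mul_left_cancel₀ hπ (by rw [hm]; ring))

lemma Gamma_shift_ne_zero {z : ℂ} (hz : ∀ m : ℤ, z ≠ (m:ℂ)) (c : ℤ) :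
    Complex.Gamma (z + c) ≠ 0 := by
  apply Complex.Gamma_ne_zero
  intro m hm
  exact hz (-m - c) (by push_cast; linear_combination hm)

lemma Gamma_one_sub_shift_ne_zero {z : ℂ} (hz : ∀ m : ℤ, z ≠ (m:ℂ)) (c : ℤ) :
    Complex.Gamma (1 - (z + c)) ≠ 0 := by
  apply Complex.Gamma_ne_zero
  intro m hm
  exact hz (1 - c + m) (by push_cast; linear_combination -hm)

lemma refl_shift {z : ℂ} (m : ℤ) :
    Complex.Gamma (z + m) * Complex.Gamma (1 - (z + m))
      = (π:ℂ) / ((-1:ℂ)^m * Complex.sin ((π:ℂ) * z)) := by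
  rw [Complex.Gamma_mul_Gamma_one_sub (z + m), sin_shift z m]

lemma neg_one_zpow_mul_self (m : ℤ) : (-1:ℂ)^m * (-1:ℂ)^m = 1 := by
  rw [← zpow_add₀ (by norm_num : (-1:ℂ) ≠ 0)]
  exact Even.neg_one_zpow ⟨m, rfl⟩

lemma claimA {z z' : ℂ} (hz : ∀ m : ℤ, z ≠ (m:ℂ)) (hz' : ∀ m : ℤ, z' ≠ (m:ℂ)) (k j : ℤ) :
    Complex.Gamma (z + ((j+1 : ℤ):ℂ)) * Complex.Gamma (z' + ((j+1 : ℤ):ℂ)) /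
        (Complex.Gamma (z + ((-k : ℤ):ℂ)) * Complex.Gamma (z' + ((-k : ℤ):ℂ)))
      = Complex.Gamma (1 - (z + ((-k : ℤ):ℂ))) * Complex.Gamma (1 - (z' + ((-k : ℤ):ℂ))) /
        (Complex.Gamma (1 - (z + ((j+1 : ℤ):ℂ))) * Complex.Gamma (1 - (z' + ((j+1 : ℤ):ℂ)))) := by
  have hS := sin_pi_ne hz
  have hS' := sin_pi_ne hz'
  have r1 := refl_shift (z := z) (j+1)
  have r2 := refl_shift (z := z') (j+1)
  have r3 := refl_shift (z := z) (-k)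
  have r4 := refl_shift (z := z') (-k)
  rw [div_eq_div_iff (mul_ne_zero (Gamma_shift_ne_zero hz (-k)) (Gamma_shift_ne_zero hz' (-k)))
    (mul_ne_zero (Gamma_one_sub_shift_ne_zero hz (j+1)) (Gamma_one_sub_shift_ne_zero hz' (j+1)))]
  have key : ((π:ℂ) / ((-1:ℂ)^(j+1) * Complex.sin ((π:ℂ)*z)))
      * ((π:ℂ) / ((-1:ℂ)^(j+1) * Complex.sin ((π:ℂ)*z')))
      = ((π:ℂ) / ((-1:ℂ)^(-k) * Complex.sin ((π:ℂ)*z)))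
      * ((π:ℂ) / ((-1:ℂ)^(-k) * Complex.sin ((π:ℂ)*z'))) := by
    rw [div_mul_div_comm, div_mul_div_comm]
    congr 1
    have e1 := neg_one_zpow_mul_self (j+1)
    have e2 := neg_one_zpow_mul_self (-k)
    linear_combination (Complex.sin ((π:ℂ)*z) * Complex.sin ((π:ℂ)*z')) * e1
      - (Complex.sin ((π:ℂ)*z) * Complex.sin ((π:ℂ)*z')) * e2
  calc Complex.Gamma (z + ((j+1 : ℤ):ℂ)) * Complex.Gamma (z' + ((j+1 : ℤ):ℂ)) *
        (Complex.Gamma (1 - (z + ((j+1 : ℤ):ℂ))) * Complex.Gamma (1 - (z' + ((j+1 : ℤ):ℂ))))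
      = (Complex.Gamma (z + ((j+1 : ℤ):ℂ)) * Complex.Gamma (1 - (z + ((j+1 : ℤ):ℂ))))
        * (Complex.Gamma (z' + ((j+1 : ℤ):ℂ)) * Complex.Gamma (1 - (z' + ((j+1 : ℤ):ℂ)))) := by
        ring
    _ = (Complex.Gamma (z + ((-k : ℤ):ℂ)) * Complex.Gamma (1 - (z + ((-k : ℤ):ℂ))))
        * (Complex.Gamma (z' + ((-k : ℤ):ℂ)) * Complex.Gamma (1 - (z' + ((-k : ℤ):ℂ)))) := by
        rw [r1, r2, r3, r4]; exact key
    _ = Complex.Gamma (1 - (z + ((-k : ℤ):ℂ))) * Complex.Gamma (1 - (z' + ((-k : ℤ):ℂ))) *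
        (Complex.Gamma (z + ((-k : ℤ):ℂ)) * Complex.Gamma (z' + ((-k : ℤ):ℂ))) := by ring

lemma claimB {z' : ℂ} (hz' : ∀ m : ℤ, z' ≠ (m:ℂ)) (k j : ℤ) :
    Complex.Gamma (z' + ((-k : ℤ):ℂ)) / Complex.Gamma (z' + ((j+1 : ℤ):ℂ)) * (-1:ℂ)^(j+k+1)
      = Complex.Gamma (1 - (z' + ((j+1 : ℤ):ℂ))) / Complex.Gamma (1 - (z' + ((-k : ℤ):ℂ))) := by
  have hS' := sin_pi_ne hz'
  have hπ : (π:ℂ) ≠ 0 := by exact_mod_cast Real.pi_ne_zero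
  have r2 := refl_shift (z := z') (j+1)
  have r4 := refl_shift (z := z') (-k)
  have g2 := Gamma_shift_ne_zero hz' (j+1)
  have h2 := Gamma_one_sub_shift_ne_zero hz' (-k)
  rw [div_mul_eq_mul_div, div_eq_div_iff g2 h2]
  have key : ((π:ℂ) / ((-1:ℂ)^(-k) * Complex.sin ((π:ℂ)*z'))) * (-1:ℂ)^(j+k+1)
      = ((π:ℂ) / ((-1:ℂ)^(j+1) * Complex.sin ((π:ℂ)*z'))) := by
    rw [div_mul_eq_mul_div, div_eq_div_iff (mul_ne_zero (zpow_ne_zero _ (by norm_num)) hS')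
      (mul_ne_zero (zpow_ne_zero _ (by norm_num)) hS')]
    have : (-1:ℂ)^(j+k+1) * (-1:ℂ)^(j+1) = (-1:ℂ)^(-k) := by
      rw [← zpow_add₀ (by norm_num : (-1:ℂ) ≠ 0)]
      exact neg_one_zpow_even_diff ⟨j+k+1, by ring⟩
    linear_combination ((π:ℂ) * Complex.sin ((π:ℂ)*z')) * this
  calc Complex.Gamma (z' + ((-k : ℤ):ℂ)) * (-1:ℂ)^(j+k+1) *
        Complex.Gamma (1 - (z' + ((-k : ℤ):ℂ)))
      = (Complex.Gamma (z' + ((-k : ℤ):ℂ)) * Complex.Gamma (1 - (z' + ((-k : ℤ):ℂ))))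
        * (-1:ℂ)^(j+k+1) := by ring
    _ = (Complex.Gamma (z' + ((j+1 : ℤ):ℂ)) * Complex.Gamma (1 - (z' + ((j+1 : ℤ):ℂ)))) := by
        rw [r2, r4]; exact key
    _ = Complex.Gamma (1 - (z' + ((j+1 : ℤ):ℂ))) * Complex.Gamma (z' + ((j+1 : ℤ):ℂ)) := by ring

end PsiAux

end PsiAux

/-- Symmetry relation: for `(z, z')` in the principal or complementary
series, `0 < ξ < 1`, and all `a = k + 1/2`, `x = j + 1/2` in `ℤ'`:
`ψ_a(x; z, z', ξ) = ψ_x(a; -z, -z', ξ)`. -/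
theorem psi_symmetry (z z' : ℂ) (ξ : ℝ) (hξ0 : 0 < ξ) (hξ1 : ξ < 1)
    (h : PrincipalSeries z z' ∨ ComplementarySeries z z') (k j : ℤ) :
    psiF z z' ξ ((k : ℝ) + 1/2) ((j : ℝ) + 1/2)
      = psiF (-z) (-z') ξ ((j : ℝ) + 1/2) ((k : ℝ) + 1/2) := by
  have hz : ∀ m : ℤ, z ≠ (m:ℂ) := by
    intro m hm
    rcases h with ⟨him, _⟩ | ⟨_, _, mm, h1, h2, _, _⟩
    · rw [hm] at him; simp at him
    · rw [hm] at h1 h2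
      simp only [Complex.intCast_re] at h1 h2
      have hh1 : mm < m := by exact_mod_cast h1
      have hh2 : m < mm + 1 := by exact_mod_cast h2
      omega
  have hz' : ∀ m : ℤ, z' ≠ (m:ℂ) := by
    intro m hm
    rcases h with ⟨him, hc⟩ | ⟨_, _, mm, _, _, h3, h4⟩
    · have h3 : z = ((m:ℂ)) := by
        have h4 : (starRingEnd ℂ) z = (m:ℂ) := by rw [← hc, hm]
        have := congrArg (starRingEnd ℂ) h4
        simpa using this
      rw [h3] at him; simp at him
    · rw [hm] at h3 h4
      simp only [Complex.intCast_re] at h3 h4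
      have hh1 : mm < m := by exact_mod_cast h3
      have hh2 : m < mm + 1 := by exact_mod_cast h4
      omega
  rw [psiF, psiF]
  set s := Real.sqrt ξ with hsdef
  have hs0 : 0 < s := Real.sqrt_pos.mpr hξ0
  have hs1 : s < 1 := by
    rw [hsdef, show (1:ℝ) = Real.sqrt 1 by simp]
    exact Real.sqrt_lt_sqrt hξ0.le hξ1
  have hs2 : s^2 = ξ := Real.sq_sqrt hξ0.le
  -- rewrite the Gamma arguments into normal form
  rw [show (((j:ℝ) + 1/2 : ℝ):ℂ) + z + 1/2 = z + ((j+1 : ℤ):ℂ) by push_cast; ring,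
    show (((j:ℝ) + 1/2 : ℝ):ℂ) + z' + 1/2 = z' + ((j+1 : ℤ):ℂ) by push_cast; ring,
    show z - (((k:ℝ) + 1/2 : ℝ):ℂ) + 1/2 = z + ((-k : ℤ):ℂ) by push_cast; ring,
    show z' - (((k:ℝ) + 1/2 : ℝ):ℂ) + 1/2 = z' + ((-k : ℤ):ℂ) by push_cast; ring,
    show z' + (((j:ℝ) + 1/2 : ℝ):ℂ) + 1/2 = z' + ((j+1 : ℤ):ℂ) by push_cast; ring,
    show (((k:ℝ) + 1/2 : ℝ):ℂ) + -z + 1/2 = 1 - (z + ((-k : ℤ):ℂ)) by push_cast; ring,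
    show (((k:ℝ) + 1/2 : ℝ):ℂ) + -z' + 1/2 = 1 - (z' + ((-k : ℤ):ℂ)) by push_cast; ring,
    show -z - (((j:ℝ) + 1/2 : ℝ):ℂ) + 1/2 = 1 - (z + ((j+1 : ℤ):ℂ)) by push_cast; ring,
    show -z' - (((j:ℝ) + 1/2 : ℝ):ℂ) + 1/2 = 1 - (z' + ((j+1 : ℤ):ℂ)) by push_cast; ring,
    show -z' + (((k:ℝ) + 1/2 : ℝ):ℂ) + 1/2 = 1 - (z' + ((-k : ℤ):ℂ)) by push_cast; ring]
  -- rewrite the two integrands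
  have hfun1 : (fun ω : ℂ => (1 - (s:ℂ)*ω) ^ (-z' + (((k:ℝ) + 1/2 : ℝ):ℂ) - 1/2) *
        (1 - (s:ℂ)/ω) ^ (z - (((k:ℝ) + 1/2 : ℝ):ℂ) - 1/2) *
        ω ^ (-(((j:ℝ) + 1/2 : ℝ):ℂ) - (((k:ℝ) + 1/2 : ℝ):ℂ) - 1))
      = fun ω : ℂ => (1 - (s:ℂ)*ω) ^ (-z' + (k:ℂ)) * (1 - (s:ℂ)/ω) ^ (z - (k:ℂ) - 1) *
        ω ^ (-(j + k + 2) : ℤ) := by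
    funext ω
    rw [show -z' + (((k:ℝ) + 1/2 : ℝ):ℂ) - 1/2 = -z' + (k:ℂ) by push_cast; ring,
      show z - (((k:ℝ) + 1/2 : ℝ):ℂ) - 1/2 = z - (k:ℂ) - 1 by push_cast; ring,
      show -(((j:ℝ) + 1/2 : ℝ):ℂ) - (((k:ℝ) + 1/2 : ℝ):ℂ) - 1 = ((-(j + k + 2) : ℤ):ℂ)
        by push_cast; ring,
      Complex.cpow_intCast]
  have hfun2 : (fun ω : ℂ => (1 - (s:ℂ)*ω) ^ (- -z' + (((j:ℝ) + 1/2 : ℝ):ℂ) - 1/2) *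
        (1 - (s:ℂ)/ω) ^ (-z - (((j:ℝ) + 1/2 : ℝ):ℂ) - 1/2) *
        ω ^ (-(((k:ℝ) + 1/2 : ℝ):ℂ) - (((j:ℝ) + 1/2 : ℝ):ℂ) - 1))
      = fun ω : ℂ => (1 - (s:ℂ)*ω) ^ (z' + (j:ℂ)) * (1 - (s:ℂ)/ω) ^ (-z - (j:ℂ) - 1) *
        ω ^ (-(j + k + 2) : ℤ) := by
    funext ω
    rw [show - -z' + (((j:ℝ) + 1/2 : ℝ):ℂ) - 1/2 = z' + (j:ℂ) by push_cast; ring,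
      show -z - (((j:ℝ) + 1/2 : ℝ):ℂ) - 1/2 = -z - (j:ℂ) - 1 by push_cast; ring,
      show -(((k:ℝ) + 1/2 : ℝ):ℂ) - (((j:ℝ) + 1/2 : ℝ):ℂ) - 1 = ((-(j + k + 2) : ℤ):ℂ)
        by push_cast; ring,
      Complex.cpow_intCast]
  rw [hfun1, hfun2]
  -- continuity of the integrand on the circle
  have he : Continuous fun θ : ℝ => Complex.exp ((θ:ℂ) * Complex.I) :=
    Complex.continuous_exp.comp (Complex.continuous_ofReal.mul continuous_const)
  have hcont : Continuous fun θ : ℝ =>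
      (1 - (s:ℂ) * Complex.exp ((θ:ℂ) * Complex.I)) ^ (-z' + (k:ℂ)) *
        (1 - (s:ℂ) / Complex.exp ((θ:ℂ) * Complex.I)) ^ (z - (k:ℂ) - 1) *
        Complex.exp ((θ:ℂ) * Complex.I) ^ (-(j + k + 2) : ℤ) := by
    rw [continuous_iff_continuousAt]
    intro θ
    have habs := Complex.norm_exp_ofReal_mul_I θ
    have habsinv : ‖(Complex.exp ((θ:ℂ) * Complex.I))⁻¹‖ = 1 := by
      rw [norm_inv, habs]; norm_num
    have h1 : ContinuousAt (fun θ : ℝ =>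
        (1 - (s:ℂ) * Complex.exp ((θ:ℂ) * Complex.I)) ^ (-z' + (k:ℂ))) θ := by
      apply ContinuousAt.cpow _ continuousAt_const _
      · exact (continuous_const.sub (continuous_const.mul he)).continuousAt
      · left
        exact PsiAux.re_pos_of_abs_one hs0 hs1 habs
    have h2 : ContinuousAt (fun θ : ℝ =>
        (1 - (s:ℂ) / Complex.exp ((θ:ℂ) * Complex.I)) ^ (z - (k:ℂ) - 1)) θ := by
      apply ContinuousAt.cpow _ continuousAt_const _
      · exact (continuous_const.sub
          (continuous_const.div he fun θ => Complex.exp_ne_zero _)).continuousAt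
      · left
        rw [div_eq_mul_inv]
        exact PsiAux.re_pos_of_abs_one hs0 hs1 habsinv
    have h3 : ContinuousAt (fun θ : ℝ =>
        Complex.exp ((θ:ℂ) * Complex.I) ^ (-(j + k + 2) : ℤ)) θ :=
      he.continuousAt.zpow₀ _ (Or.inl (Complex.exp_ne_zero _))
    exact (h1.mul h2).mul h3
  -- substitution
  have hsub := PsiAux.circle_subst hs0 hs1
    (fun ω : ℂ => (1 - (s:ℂ)*ω) ^ (-z' + (k:ℂ)) * (1 - (s:ℂ)/ω) ^ (z - (k:ℂ) - 1) *
      ω ^ (-(j + k + 2) : ℤ)) hcont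
  -- interval representation of circle integrals
  have hrep : ∀ g : ℂ → ℂ, (∮ w in C(0, 1), g w)
      = ∫ θ in (0:ℝ)..2*π, (Complex.exp ((θ:ℂ) * Complex.I) * Complex.I) *
          g (Complex.exp ((θ:ℂ) * Complex.I)) := by
    intro g
    have hcm : ∀ θ : ℝ, circleMap 0 1 θ = Complex.exp ((θ:ℂ) * Complex.I) := by
      intro θ; simp [circleMap]
    simp only [circleIntegral, deriv_circleMap, hcm, smul_eq_mul]
  -- pointwise transform of the substituted integral
  have hC : (∮ ω in C(0,1), (1 - (s:ℂ)*ω) ^ (-z' + (k:ℂ)) * (1 - (s:ℂ)/ω) ^ (z - (k:ℂ) - 1) *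
        ω ^ (-(j + k + 2) : ℤ))
      = (((1 - s^2 : ℝ)):ℂ) ^ ((-z' + (k:ℂ)) + (z - (k:ℂ) - 1) + 1) * (-1:ℂ)^((j + k + 2)+1) *
        ∮ ω in C(0,1), (1 - (s:ℂ)*ω) ^ (z' + (j:ℂ)) * (1 - (s:ℂ)/ω) ^ (-z - (j:ℂ) - 1) *
          ω ^ (-(j + k + 2) : ℤ) := by
    rw [hsub, hrep, hrep, ← intervalIntegral.integral_const_mul]
    apply intervalIntegral.integral_congr
    intro θ _
    have habs := Complex.norm_exp_ofReal_mul_I θ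
    have htr := PsiAux.transform_pointwise hs0 hs1 (-z' + (k:ℂ)) (z - (k:ℂ) - 1)
      (z' + (j:ℂ)) (-z - (j:ℂ) - 1) (j + k + 2)
      (by push_cast; ring) (by push_cast; ring) habs
    linear_combination (Complex.exp ((θ:ℂ)*Complex.I)*Complex.I) * htr
  rw [hC]
  -- prefactor identities
  have hP := congrArg posSqrtRe (PsiAux.claimA hz hz' k j)
  rw [hP]
  have hQ := PsiAux.claimB hz' k j
  have hξc : (1 : ℂ) - (ξ:ℂ) ≠ 0 := by
    have : ((1 - ξ : ℝ):ℂ) ≠ 0 := by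
      exact_mod_cast (by linarith : (1 - ξ : ℝ) ≠ 0)
    push_cast at this
    exact this
  have hE : (1 - (ξ:ℂ)) ^ ((z' - z + 1) / 2) *
        ((((1 - s^2 : ℝ)):ℂ) ^ ((-z' + (k:ℂ)) + (z - (k:ℂ) - 1) + 1) * (-1:ℂ)^((j + k + 2)+1))
      = (1 - (ξ:ℂ)) ^ ((-z' - -z + 1) / 2) * (-1:ℂ)^(j+k+1) := by
    have hbase : (((1 - s^2 : ℝ)):ℂ) = 1 - (ξ:ℂ) := by
      rw [hs2]; push_cast; ring
    rw [hbase]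
    have hmerge : (1 - (ξ:ℂ)) ^ ((z' - z + 1) / 2) *
          (1 - (ξ:ℂ)) ^ ((-z' + (k:ℂ)) + (z - (k:ℂ) - 1) + 1)
        = (1 - (ξ:ℂ)) ^ ((-z' - -z + 1) / 2) := by
      rw [← Complex.cpow_add _ _ hξc]
      congr 1
      ring
    have hsign : (-1:ℂ)^((j + k + 2)+1) = (-1:ℂ)^(j+k+1) :=
      PsiAux.neg_one_zpow_even_diff ⟨1, by ring⟩
    rw [hsign, ← hmerge]
    ring
  linear_combination
    (posSqrtRe (Complex.Gamma (1 - (z + ((-k : ℤ):ℂ))) * Complex.Gamma (1 - (z' + ((-k : ℤ):ℂ))) /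
        (Complex.Gamma (1 - (z + ((j+1 : ℤ):ℂ))) * Complex.Gamma (1 - (z' + ((j+1 : ℤ):ℂ)))))
      * (2*(Real.pi:ℂ)*Complex.I)⁻¹
      * (∮ ω in C(0,1), (1 - (s:ℂ)*ω) ^ (z' + (j:ℂ)) * (1 - (s:ℂ)/ω) ^ (-z - (j:ℂ) - 1) *
          ω ^ (-(j + k + 2) : ℤ))
      * (Complex.Gamma (z' + ((-k : ℤ):ℂ)) / Complex.Gamma (z' + ((j+1 : ℤ):ℂ)))) * hE
    + (posSqrtRe (Complex.Gamma (1 - (z + ((-k : ℤ):ℂ))) * Complex.Gamma (1 - (z' + ((-k : ℤ):ℂ))) /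
        (Complex.Gamma (1 - (z + ((j+1 : ℤ):ℂ))) * Complex.Gamma (1 - (z' + ((j+1 : ℤ):ℂ)))))
      * (2*(Real.pi:ℂ)*Complex.I)⁻¹
      * (∮ ω in C(0,1), (1 - (s:ℂ)*ω) ^ (z' + (j:ℂ)) * (1 - (s:ℂ)/ω) ^ (-z - (j:ℂ) - 1) *
          ω ^ (-(j + k + 2) : ℤ))
      * ((1 - (ξ:ℂ)) ^ ((-z' - -z + 1) / 2))) * hQ
end

section
/- Let N, N′ ≥ 1 be integers and ξ < 0, and set p = ξ/(ξ−1) ∈ (0,1) and L = N + N′ − 1. Then there exists a constant c = c(N, N′, ξ) > 0, independent of λ, such that for every partition λ with ℓ(λ) ≤ N and λ_1 ≤ N′, setting x_i = λ_i + N − i for i = 1, …, N (so that 0 ≤ x_i ≤ L): M_{N,−N′,ξ}(λ) = c · ∏_{i=1}^{N} W^K_{p,L}(x_i) · ∏_{1≤i<j≤N}(x_i − x_j)². In other words, under the correspondence λ ↦ {x_1, …, x_N}, the z-measure of the second degenerate series with parameters (z = N, z′ = −N′, ξ) is the N-point Krawtchouk orthogonal polynomial ensemble with parameters (p, L). -/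
/-- The Krawtchouk weight function `W^K_{p,L}(x) = C(L,x) p^x (1-p)^{L-x}` on `{0, …, L}`. -/
noncomputable def krawW (p : ℝ) (L x : ℕ) : ℝ :=
  (Nat.choose L x : ℝ) * p ^ x * (1 - p) ^ (L - x)

section aux

lemma Yd.part_ne_iff (μ : Yd) (i : ℕ) : μ.part i ≠ 0 ↔ i < μ.len := by
  obtain ⟨M, hM⟩ := μ.vanish
  set F : Finset ℕ := (Finset.range M).filter (fun j => μ.part j ≠ 0) with hF
  have hmem : ∀ j, j ∈ F ↔ μ.part j ≠ 0 := by
    intro j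
    simp only [hF, Finset.mem_filter, Finset.mem_range]
    constructor
    · rintro ⟨_, h⟩; exact h
    · intro h; refine ⟨?_, h⟩
      by_contra hc
      exact h (hM j (le_of_not_gt hc))
  have hlen : μ.len = F.card := by
    have hset : {j : ℕ | μ.part j ≠ 0} = ↑F := by
      ext j; simp [hmem j]
    have : Nat.card {j : ℕ // μ.part j ≠ 0} = Set.ncard {j : ℕ | μ.part j ≠ 0} :=
      Nat.card_coe_set_eq _
    rw [Yd.len, this, hset, Set.ncard_coe_finset]
  have hdc : ∀ j k, j ≤ k → k ∈ F → j ∈ F := by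
    intro j k hjk hk
    rw [hmem] at hk ⊢
    intro h0
    exact hk (Nat.le_zero.mp (h0 ▸ μ.anti hjk))
  constructor
  · intro h
    rw [hlen]
    have : Finset.range (i+1) ⊆ F := by
      intro j hj
      exact hdc j i (Nat.lt_succ_iff.mp (Finset.mem_range.mp hj)) ((hmem i).mpr h)
    calc i < i + 1 := Nat.lt_succ_self i
      _ = (Finset.range (i+1)).card := (Finset.card_range _).symm
      _ ≤ F.card := Finset.card_le_card this
  · intro h
    by_contra hc
    replace hc : μ.part i = 0 := by omega
    have : F ⊆ Finset.range i := by
      intro k hk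
      rw [Finset.mem_range]
      by_contra hik
      exact (hmem k).mp hk ((hc ▸ μ.anti (le_of_not_gt hik) : μ.part k ≤ 0) |> Nat.le_zero.mp)
    have := Finset.card_le_card this
    rw [Finset.card_range] at this
    omega

lemma Yd.part_eq_zero (μ : Yd) {i : ℕ} (h : μ.len ≤ i) : μ.part i = 0 := by
  by_contra hc; exact absurd ((μ.part_ne_iff i).mp hc) (by omega)

lemma Yd.size_eq_sum (μ : Yd) (N N' : ℕ) (hl : μ.len ≤ N) (h0 : μ.part 0 ≤ N') :
    μ.size = ∑ i ∈ Finset.range N, μ.part i := by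
  classical
  set T : Finset (ℕ × ℕ) :=
    (Finset.range N).biUnion (fun i => {i} ×ˢ Finset.range (μ.part i)) with hT
  have hmem : ∀ p : ℕ × ℕ, p ∈ T ↔ p.2 < μ.part p.1 := by
    intro p
    simp only [hT, Finset.mem_biUnion, Finset.mem_range, Finset.mem_product,
      Finset.mem_singleton]
    constructor
    · rintro ⟨i, hi, h1, h2⟩; rw [h1]; exact h2
    · intro h
      refine ⟨p.1, ?_, rfl, h⟩
      have : μ.part p.1 ≠ 0 := by omega
      exact lt_of_lt_of_le ((μ.part_ne_iff p.1).mp this) hl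
  have hset : {p : ℕ × ℕ | p.2 < μ.part p.1} = ↑T := by
    ext p; simp [hmem p]
  have h1 : μ.size = T.card := by
    have : Nat.card {p : ℕ × ℕ // p.2 < μ.part p.1}
        = Set.ncard {p : ℕ × ℕ | p.2 < μ.part p.1} := Nat.card_coe_set_eq _
    rw [Yd.size, this, hset, Set.ncard_coe_finset]
  rw [h1, hT, Finset.card_biUnion]
  · apply Finset.sum_congr rfl
    intro i _
    rw [Finset.card_product, Finset.card_singleton, Finset.card_range, one_mul]
  · intro x _ y _ hxy
    simp only [Finset.disjoint_left, Finset.mem_product, Finset.mem_singleton]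
    rintro p ⟨h1, _⟩ ⟨h2, _⟩
    exact hxy (h1 ▸ h2)

noncomputable def Vd (μ : Yd) (M : ℕ) : ℝ :=
  ∏ i ∈ Finset.range M, ∏ j ∈ Finset.range M,
    if i < j then ((μ.part i : ℝ) - i) - ((μ.part j : ℝ) - j) else 1

noncomputable def Fd (μ : Yd) (M : ℕ) : ℝ :=
  ∏ i ∈ Finset.range M, (Nat.factorial (μ.part i + (M - 1 - i)) : ℝ)

lemma ratio_step (μ : Yd) (M : ℕ) (h : μ.part M = 0) :
    Vd μ (M+1) / Fd μ (M+1) = Vd μ M / Fd μ M := by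
  have hV : Vd μ (M+1) = Vd μ M * ∏ i ∈ Finset.range M, ((μ.part i : ℝ) - i + M) := by
    rw [Vd, Finset.prod_range_succ]
    have hlast : (∏ j ∈ Finset.range (M+1),
        if M < j then ((μ.part M : ℝ) - M) - ((μ.part j : ℝ) - j) else 1) = 1 := by
      apply Finset.prod_eq_one
      intro j hj
      rw [if_neg (by simp at hj; omega)]
    rw [hlast, mul_one]
    rw [show Vd μ M * ∏ i ∈ Finset.range M, ((μ.part i : ℝ) - i + M)
        = ∏ i ∈ Finset.range M, ((∏ j ∈ Finset.range M,
            if i < j then ((μ.part i : ℝ) - i) - ((μ.part j : ℝ) - j) else 1)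
          * ((μ.part i : ℝ) - i + M)) by rw [Finset.prod_mul_distrib]; rfl]
    apply Finset.prod_congr rfl
    intro i hi
    rw [Finset.prod_range_succ, if_pos (Finset.mem_range.mp hi), h]
    push_cast; ring
  have hF : Fd μ (M+1) = Fd μ M * ∏ i ∈ Finset.range M, ((μ.part i : ℝ) - i + M) := by
    rw [Fd, Finset.prod_range_succ, h]
    rw [show 0 + (M + 1 - 1 - M) = 0 by omega, Nat.factorial_zero, Nat.cast_one, mul_one]
    rw [show Fd μ M * ∏ i ∈ Finset.range M, ((μ.part i : ℝ) - i + M)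
        = ∏ i ∈ Finset.range M, ((Nat.factorial (μ.part i + (M - 1 - i)) : ℝ)
            * ((μ.part i : ℝ) - i + M)) by rw [Finset.prod_mul_distrib]; rfl]
    apply Finset.prod_congr rfl
    intro i hi
    have hiM : i < M := Finset.mem_range.mp hi
    rw [show μ.part i + (M + 1 - 1 - i) = (μ.part i + (M - 1 - i)) + 1 by omega,
      Nat.factorial_succ]
    have hc : ((M - 1 - i : ℕ) : ℝ) = (M:ℝ) - 1 - i := by
      have h1 : 1 + i ≤ M := by omega
      rw [Nat.sub_sub, Nat.cast_sub h1]; push_cast; ring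
    push_cast [hc]; ring
  rw [hV, hF, mul_comm (Fd μ M) _, ← div_div, mul_div_assoc]
  have h0 : (∏ i ∈ Finset.range M, ((μ.part i : ℝ) - i + M)) ≠ 0 := by
    apply Finset.prod_ne_zero_iff.mpr
    intro i hi
    have hiM : i < M := Finset.mem_range.mp hi
    have : (i : ℝ) < M := by exact_mod_cast hiM
    have : (0:ℝ) ≤ (μ.part i : ℝ) := Nat.cast_nonneg _
    nlinarith
  rw [div_self h0, mul_one]

lemma ratio_all (μ : Yd) {M : ℕ} (h : μ.len ≤ M) :
    Vd μ M / Fd μ M = Vd μ μ.len / Fd μ μ.len := by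
  induction M, h using Nat.le_induction with
  | base => rfl
  | succ n hn ih => rw [ratio_step μ n (μ.part_eq_zero hn), ih]

lemma prodShift (a m : ℕ) :
    (∏ k ∈ Finset.range m, ((a:ℝ) + 1 + k)) * (Nat.factorial a : ℝ)
      = (Nat.factorial (a + m) : ℝ) := by
  induction m with
  | zero => simp
  | succ m ih =>
    rw [Finset.prod_range_succ]
    have : (a:ℝ) + 1 + m = ((a + m + 1 : ℕ) : ℝ) := by push_cast; ring
    rw [mul_comm (∏ k ∈ Finset.range m, ((a:ℝ) + 1 + k)) _, this, mul_assoc, ih]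
    rw [show a + (m+1) = (a + m) + 1 by ring, Nat.factorial_succ]
    push_cast; ring

lemma prodDesc (b m : ℕ) (h : m ≤ b) :
    (∏ k ∈ Finset.range m, ((b:ℝ) - k)) * (Nat.factorial (b - m) : ℝ)
      = (Nat.factorial b : ℝ) := by
  induction m with
  | zero => simp
  | succ m ih =>
    rw [Finset.prod_range_succ]
    have h1 : (b:ℝ) - m = ((b - m : ℕ) : ℝ) := by
      have : m ≤ b := by omega
      push_cast [this]; ring
    have h2 : Nat.factorial (b - m) = (b - m) * Nat.factorial (b - (m+1)) := by
      rw [show b - m = (b - (m+1)) + 1 by omega, Nat.factorial_succ]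
    rw [mul_assoc, h1, ← Nat.cast_mul, ← h2]
    exact ih (by omega)

lemma per_row (N N' : ℕ) (hN : 1 ≤ N) (hN' : 1 ≤ N') (ξ : ℝ) (hξ : ξ < 0)
    (i m : ℕ) (hi : i < N) (hm : m ≤ N') :
    (((1-ξ)^N')⁻¹ : ℝ) * ξ^m * (∏ k ∈ Finset.range m, ((N:ℝ) - i + k))
      * (∏ k ∈ Finset.range m, (-(N':ℝ) - i + k))
      * (((Nat.factorial (m + (N-1-i)) : ℝ))⁻¹)^2
    = ((1-ξ)^(N-1) * ((-ξ)^(N-1-i))⁻¹ * (Nat.factorial (N'+i) : ℝ)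
        / ((Nat.factorial (N-1-i) : ℝ) * (Nat.factorial (N+N'-1) : ℝ)))
      * krawW (ξ/(ξ-1)) (N+N'-1) (m + (N-1-i)) := by
  have hu : (1-ξ) ≠ 0 := by linarith
  have hv : (-ξ) ≠ 0 := by linarith
  have hd : ∀ n : ℕ, (Nat.factorial n : ℝ) ≠ 0 :=
    fun n => Nat.cast_ne_zero.mpr (Nat.factorial_ne_zero n)
  have hq1 : (∏ k ∈ Finset.range m, ((N:ℝ) - i + k))
      = (Nat.factorial (m + (N-1-i)) : ℝ) / (Nat.factorial (N-1-i) : ℝ) := by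
    rw [eq_div_iff (hd _), show m + (N-1-i) = (N-1-i) + m by ring, ← prodShift]
    congr 1
    apply Finset.prod_congr rfl
    intro k _
    have : ((N - 1 - i : ℕ) : ℝ) = (N:ℝ) - 1 - i := by
      rw [Nat.sub_sub, Nat.cast_sub (by omega : 1 + i ≤ N)]; push_cast; ring
    rw [this]; ring
  have hq2 : (∏ k ∈ Finset.range m, (-(N':ℝ) - i + k))
      = (-1)^m * ((Nat.factorial (N'+i) : ℝ) / (Nat.factorial (N'+i-m) : ℝ)) := by
    have hsign : ((-1 : ℝ))^m = ∏ _k ∈ Finset.range m, (-1 : ℝ) := by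
      rw [Finset.prod_const, Finset.card_range]
    have : (∏ k ∈ Finset.range m, (-(N':ℝ) - i + k))
        = (-1)^m * ∏ k ∈ Finset.range m, (((N'+i : ℕ):ℝ) - k) := by
      rw [hsign, ← Finset.prod_mul_distrib]
      apply Finset.prod_congr rfl
      intro k _
      push_cast; ring
    rw [this]
    congr 1
    rw [eq_div_iff (hd _), prodDesc _ _ (by omega)]
  rw [hq1, hq2, krawW, Nat.cast_choose ℝ (by omega : m + (N-1-i) ≤ N+N'-1)]
  rw [show N+N'-1 - (m + (N-1-i)) = N'+i-m by omega]
  have hξ1 : ξ - 1 ≠ 0 := by linarith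
  have hp : ξ/(ξ-1) = (-ξ)/(1-ξ) := by
    rw [div_eq_div_iff hξ1 hu]; ring
  have h1p : (1:ℝ) - ξ/(ξ-1) = 1/(1-ξ) := by
    have h2 : ξ/(ξ-1) = 1 - 1/(1-ξ) := by
      rw [eq_sub_iff_add_eq, div_add_div _ _ hξ1 hu,
        div_eq_one_iff_eq (mul_ne_zero hξ1 hu)]
      ring
    rw [h2]; ring
  rw [h1p, hp, div_pow, div_pow, one_pow]
  have hcon : (1-ξ)^(N-1) * (1-ξ)^N' = (1-ξ)^(m + (N-1-i)) * (1-ξ)^(N'+i-m) := by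
    rw [← pow_add, ← pow_add]; congr 1; omega
  have hsgn : ξ^m * (-1:ℝ)^m = (-ξ)^m := by
    rw [← mul_pow]; congr 1; ring
  have hvkey : (-ξ)^(m + (N-1-i)) = (-ξ)^m * (-ξ)^(N-1-i) := by rw [← pow_add]
  field_simp
  set X := ((m + (N - 1 - i)).factorial : ℝ) with hX
  set D := ((N - 1 - i).factorial : ℝ) with hD
  set B := ((N' + i).factorial : ℝ) with hB
  set E := ((N' + i - m).factorial : ℝ) with hE
  set L := ((N + N' - 1).factorial : ℝ) with hL
  linear_combination
    (X^2*B*D*L*E * (-ξ)^(N-1-i) * ((1-ξ)^(m+(N-1-i)) * (1-ξ)^(N'+i-m))) * hsgn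
    - (X^2*B*D*L*E * ((1-ξ)^(m+(N-1-i)) * (1-ξ)^(N'+i-m))) * hvkey
    - ((-ξ)^(m+(N-1-i))) * hcon

end aux

/-- For integers `N, N' ≥ 1` and `ξ < 0`, with `p = ξ/(ξ-1) ∈ (0,1)` and
`L = N + N' - 1`, there is a constant `c > 0` such that for every partition `λ` contained in
the `N × N'` rectangle, with `x_i = λ_i + N - i` (0-based: `x_i = λ_{i+1} + N - 1 - i`):
`M_{N,-N',ξ}(λ) = c ∏_i W^K_{p,L}(x_i) ∏_{i<j} (x_i - x_j)²`; i.e. the second degenerate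
series z-measure is the `N`-point Krawtchouk orthogonal polynomial ensemble. -/
theorem second_degenerate_krawtchouk (N N' : ℕ) (hN : 1 ≤ N) (hN' : 1 ≤ N')
    (ξ : ℝ) (hξ : ξ < 0) :
    ∃ c : ℝ, 0 < c ∧ ∀ μ : Yd, μ.len ≤ N → μ.part 0 ≤ N' →
      zWt (N : ℂ) (-(N' : ℂ)) (ξ : ℂ) μ =
        (((c * ∏ i ∈ Finset.range N, krawW (ξ / (ξ - 1)) (N + N' - 1) (μ.part i + (N - 1 - i))) *
            ∏ i ∈ Finset.range N, ∏ j ∈ Finset.range N,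
              if i < j then
                (((μ.part i + (N - 1 - i) : ℕ) : ℝ) - ((μ.part j + (N - 1 - j) : ℕ) : ℝ)) ^ 2
              else 1 : ℝ) : ℂ) := by
  have hu0 : (0:ℝ) < 1 - ξ := by linarith
  have hv0 : (0:ℝ) < -ξ := by linarith
  have hd : ∀ n : ℕ, (Nat.factorial n : ℝ) ≠ 0 :=
    fun n => Nat.cast_ne_zero.mpr (Nat.factorial_ne_zero n)
  refine ⟨∏ i ∈ Finset.range N, ((1-ξ)^(N-1) * ((-ξ)^(N-1-i))⁻¹ * (Nat.factorial (N'+i) : ℝ)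
      / ((Nat.factorial (N-1-i) : ℝ) * (Nat.factorial (N+N'-1) : ℝ))), ?_, ?_⟩
  · apply Finset.prod_pos
    intro i _
    have h1 : (0:ℝ) < (1-ξ)^(N-1) := pow_pos hu0 _
    have h2 : (0:ℝ) < ((-ξ)^(N-1-i))⁻¹ := inv_pos.mpr (pow_pos hv0 _)
    have h3 : (0:ℝ) < (Nat.factorial (N'+i) : ℝ) := by
      exact_mod_cast Nat.factorial_pos _
    have h4 : (0:ℝ) < (Nat.factorial (N-1-i) : ℝ) * (Nat.factorial (N+N'-1) : ℝ) := by
      have := Nat.factorial_pos (N-1-i); have := Nat.factorial_pos (N+N'-1)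
      positivity
    positivity
  intro μ hl h0
  have hpart_le : ∀ i, μ.part i ≤ N' := fun i => le_trans (μ.anti (Nat.zero_le i)) h0
  -- Complexify: LHS is the coercion of a real number
  rw [zWt]
  have hcpow : (1 - (ξ:ℂ)) ^ ((N:ℂ) * -(N':ℂ)) = ((((1-ξ)^(N*N'))⁻¹ : ℝ) : ℂ) := by
    have h1 : ((N:ℂ) * -(N':ℂ)) = -((N*N' : ℕ) : ℂ) := by push_cast; ring
    rw [h1, Complex.cpow_neg, Complex.cpow_natCast]
    push_cast
    ring
  have hP1 : pochY (N:ℂ) μ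
      = ((∏ i ∈ Finset.range μ.len, ∏ k ∈ Finset.range (μ.part i), ((N:ℝ) - i + k) : ℝ) : ℂ) := by
    rw [pochY, Complex.ofReal_prod]
    apply Finset.prod_congr rfl
    intro i _
    rw [pochC, Complex.ofReal_prod]
    apply Finset.prod_congr rfl
    intro k _
    push_cast
    ring
  have hP2 : pochY (-(N':ℂ)) μ
      = ((∏ i ∈ Finset.range μ.len, ∏ k ∈ Finset.range (μ.part i), (-(N':ℝ) - i + k) : ℝ) : ℂ) := by
    rw [pochY, Complex.ofReal_prod]
    apply Finset.prod_congr rfl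
    intro i _
    rw [pochC, Complex.ofReal_prod]
    apply Finset.prod_congr rfl
    intro k _
    push_cast
    ring
  rw [hcpow, hP1, hP2, show ((ξ:ℂ))^μ.size = ((ξ^μ.size : ℝ) : ℂ) from by push_cast; ring]
  rw [show (((μ.dim / (Nat.factorial μ.size : ℝ)) : ℝ) : ℂ) ^ 2
      = (((μ.dim / (Nat.factorial μ.size : ℝ))^2 : ℝ) : ℂ) from by push_cast; ring]
  rw [← Complex.ofReal_mul, ← Complex.ofReal_mul, ← Complex.ofReal_mul, ← Complex.ofReal_mul]
  rw [Complex.ofReal_inj]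
  -- Now a purely real identity
  have hr : μ.dim / (Nat.factorial μ.size : ℝ) = Vd μ N / Fd μ N := by
    rw [ratio_all μ hl, Yd.dim]
    show ((Nat.factorial μ.size : ℝ) * Vd μ μ.len / Fd μ μ.len) / (Nat.factorial μ.size : ℝ) = _
    rw [mul_div_assoc, mul_div_cancel_left₀ _ (hd _)]
  rw [hr]
  -- extend the Pochhammer products from len to N
  have hsub : Finset.range μ.len ⊆ Finset.range N := Finset.range_subset_range.mpr hl
  have hP1e : (∏ i ∈ Finset.range μ.len, ∏ k ∈ Finset.range (μ.part i), ((N:ℝ) - i + k))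
      = ∏ i ∈ Finset.range N, ∏ k ∈ Finset.range (μ.part i), ((N:ℝ) - i + k) := by
    apply Finset.prod_subset hsub
    intro i _ hi
    rw [μ.part_eq_zero (by simpa using hi : μ.len ≤ i)]
    simp
  have hP2e : (∏ i ∈ Finset.range μ.len, ∏ k ∈ Finset.range (μ.part i), (-(N':ℝ) - i + k))
      = ∏ i ∈ Finset.range N, ∏ k ∈ Finset.range (μ.part i), (-(N':ℝ) - i + k) := by
    apply Finset.prod_subset hsub
    intro i _ hi
    rw [μ.part_eq_zero (by simpa using hi : μ.len ≤ i)]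
    simp
  rw [hP1e, hP2e]
  -- the squared Vandermonde on the RHS
  have hsq : (∏ i ∈ Finset.range N, ∏ j ∈ Finset.range N,
      if i < j then
        (((μ.part i + (N - 1 - i) : ℕ) : ℝ) - ((μ.part j + (N - 1 - j) : ℕ) : ℝ)) ^ 2
      else 1) = (Vd μ N)^2 := by
    rw [Vd, ← Finset.prod_pow]
    apply Finset.prod_congr rfl
    intro i hi
    rw [← Finset.prod_pow]
    apply Finset.prod_congr rfl
    intro j hj
    have hiN : i < N := Finset.mem_range.mp hi
    have hjN : j < N := Finset.mem_range.mp hj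
    by_cases hij : i < j
    · rw [if_pos hij, if_pos hij]
      congr 1
      have c1 : ((N - 1 - i : ℕ) : ℝ) = (N:ℝ) - 1 - i := by
        rw [Nat.sub_sub, Nat.cast_sub (by omega : 1 + i ≤ N)]; push_cast; ring
      have c2 : ((N - 1 - j : ℕ) : ℝ) = (N:ℝ) - 1 - j := by
        rw [Nat.sub_sub, Nat.cast_sub (by omega : 1 + j ≤ N)]; push_cast; ring
      push_cast [c1, c2]
      ring
    · rw [if_neg hij, if_neg hij, one_pow]
  rw [hsq]
  -- the scalar identity, row by row
  have hscal : ((1-ξ)^(N*N'))⁻¹ * ξ^μ.size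
        * (∏ i ∈ Finset.range N, ∏ k ∈ Finset.range (μ.part i), ((N:ℝ) - i + k))
        * (∏ i ∈ Finset.range N, ∏ k ∈ Finset.range (μ.part i), (-(N':ℝ) - i + k))
        * ((Fd μ N)⁻¹)^2
      = (∏ i ∈ Finset.range N, ((1-ξ)^(N-1) * ((-ξ)^(N-1-i))⁻¹ * (Nat.factorial (N'+i) : ℝ)
          / ((Nat.factorial (N-1-i) : ℝ) * (Nat.factorial (N+N'-1) : ℝ))))
        * ∏ i ∈ Finset.range N, krawW (ξ / (ξ - 1)) (N + N' - 1) (μ.part i + (N - 1 - i)) := by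
    rw [← Finset.prod_mul_distrib]
    have e1 : ((1-ξ)^(N*N'))⁻¹ = ∏ _i ∈ Finset.range N, (((1-ξ)^N')⁻¹ : ℝ) := by
      rw [Finset.prod_const, Finset.card_range, inv_pow, ← pow_mul, mul_comm N' N]
    have e2 : ξ^μ.size = ∏ i ∈ Finset.range N, ξ^(μ.part i) := by
      rw [Finset.prod_pow_eq_pow_sum, μ.size_eq_sum N N' hl h0]
    have e3 : ((Fd μ N)⁻¹)^2
        = ∏ i ∈ Finset.range N, (((Nat.factorial (μ.part i + (N-1-i)) : ℝ))⁻¹)^2 := by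
      rw [Fd, ← Finset.prod_inv_distrib, ← Finset.prod_pow]
    rw [e1, e2, e3, ← Finset.prod_mul_distrib, ← Finset.prod_mul_distrib,
      ← Finset.prod_mul_distrib, ← Finset.prod_mul_distrib]
    apply Finset.prod_congr rfl
    intro i hi
    exact per_row N N' hN hN' ξ hξ i (μ.part i) (Finset.mem_range.mp hi) (hpart_le i)
  calc ((1-ξ)^(N*N'))⁻¹ * ξ^μ.size
        * (∏ i ∈ Finset.range N, ∏ k ∈ Finset.range (μ.part i), ((N:ℝ) - i + k))
        * (∏ i ∈ Finset.range N, ∏ k ∈ Finset.range (μ.part i), (-(N':ℝ) - i + k))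
        * (Vd μ N / Fd μ N)^2
      = (((1-ξ)^(N*N'))⁻¹ * ξ^μ.size
        * (∏ i ∈ Finset.range N, ∏ k ∈ Finset.range (μ.part i), ((N:ℝ) - i + k))
        * (∏ i ∈ Finset.range N, ∏ k ∈ Finset.range (μ.part i), (-(N':ℝ) - i + k))
        * ((Fd μ N)⁻¹)^2) * (Vd μ N)^2 := by
        field_simp
    _ = _ := by rw [hscal]
end
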